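/- arXiv:math/0702817 — 7 statements merged into one kernel-verified Lean document; each statement's English description precedes it below -/
import Mathlib

section
/- For all natural numbers n and k with 0 < k ≤ n, the 2-adic valuation of the Stirling number of the second kind S(n,k) satisfies ν₂(S(n,k)) ≥ d(k) − d(n), where d(m) denotes the number of ones in the binary representation of m. -/
/-- Stirling numbers of the second kind. -/
def stirling : ℕ → ℕ → ℕ
  | 0, 0 => 1
  | 0, _ + 1 => 0
  | _ + 1, 0 => 0
  | n + 1, k + 1 => stirling n k + (k + 1) * stirling n (k + 1)

/-- Binary digit sum. -/
def binDigitSum (m : ℕ) : ℕ := (Nat.digits 2 m).sum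

open Finset Nat



lemma stirling_succ_succ (n k : ℕ) :
    stirling (n+1) (k+1) = stirling n k + (k+1) * stirling n (k+1) := rfl

lemma stirling_eq_zero_of_lt : ∀ {n k : ℕ}, n < k → stirling n k = 0
  | 0, 0, h => absurd h (lt_irrefl 0)
  | 0, _+1, _ => rfl
  | _+1, 0, h => by omega
  | n+1, k+1, h => by
      rw [stirling_succ_succ, stirling_eq_zero_of_lt (show n < k by omega),
        stirling_eq_zero_of_lt (show n < k+1 by omega)]
      simp

lemma stirling_pos : ∀ {n k : ℕ}, 0 < k → k ≤ n → 0 < stirling n k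
  | 0, _, hk, hkn => by omega
  | n+1, 0, hk, _ => by omega
  | n+1, k+1, hk, hkn => by
      rw [stirling_succ_succ]
      rcases Nat.eq_zero_or_pos k with rfl | hkpos
      · rcases Nat.eq_zero_or_pos n with rfl | h
        · simp [stirling]
        · have := stirling_pos (n := n) (k := 1) one_pos h
          simp only [Nat.zero_add, one_mul]
          omega
      · have := stirling_pos hkpos (show k ≤ n by omega)
        omega

lemma mul_descFactorial (x k : ℕ) :
    x * x.descFactorial k = x.descFactorial (k+1) + k * x.descFactorial k := by
  rcases Nat.lt_or_ge x k with h | h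
  · rw [Nat.descFactorial_eq_zero_iff_lt.2 h, Nat.descFactorial_eq_zero_iff_lt.2 (by omega)]
    simp
  · rw [Nat.descFactorial_succ]
    have h2 : (x - k) * x.descFactorial k + k * x.descFactorial k
        = ((x - k) + k) * x.descFactorial k := by rw [Nat.add_mul]
    rw [h2]
    congr 1
    omega

lemma sum_stirling_descFactorial (n x : ℕ) :
    ∑ k ∈ range (n+1), stirling n k * x.descFactorial k = x ^ n := by
  induction n with
  | zero => simp [stirling]
  | succ n ih =>
    have e1 : ∑ k ∈ range (n+2), stirling (n+1) k * x.descFactorial k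
        = ∑ k ∈ range (n+1), stirling n k * x.descFactorial (k+1)
          + ∑ k ∈ range (n+1), (k+1) * stirling n (k+1) * x.descFactorial (k+1) := by
      rw [Finset.sum_range_succ' (fun k => stirling (n+1) k * x.descFactorial k) (n+1)]
      have h0 : stirling (n+1) 0 * x.descFactorial 0 = 0 := by simp [stirling]
      rw [h0, add_zero, ← Finset.sum_add_distrib]
      refine Finset.sum_congr rfl fun k _ => ?_
      rw [stirling_succ_succ, Nat.add_mul]
    have e2 : ∑ k ∈ range (n+1), (k+1) * stirling n (k+1) * x.descFactorial (k+1)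
        = ∑ k ∈ range (n+1), k * stirling n k * x.descFactorial k := by
      rw [Finset.sum_range_succ' (fun k => k * stirling n k * x.descFactorial k) n]
      rw [Finset.sum_range_succ (fun k => (k+1) * stirling n (k+1) * x.descFactorial (k+1)) n]
      rw [stirling_eq_zero_of_lt (show n < n+1 by omega)]
      simp
    rw [e1, e2, pow_succ, ← ih, Finset.sum_mul, ← Finset.sum_add_distrib]
    refine Finset.sum_congr rfl fun k _ => ?_
    calc stirling n k * x.descFactorial (k+1) + k * stirling n k * x.descFactorial k
        = stirling n k * (x.descFactorial (k+1) + k * x.descFactorial k) := by ring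
      _ = stirling n k * (x * x.descFactorial k) := by rw [← mul_descFactorial]
      _ = stirling n k * x.descFactorial k * x := by ring

lemma descFactorial_mul (x i : ℕ) : ∀ j : ℕ,
    x.descFactorial i * x.descFactorial j
      = ∑ t ∈ range (j+1), i.choose t * j.choose t * t ! * x.descFactorial (i + j - t)
  | 0 => by simp
  | (j+1) => by
    have hstep : ∀ t ∈ range (j+1),
        i.choose t * j.choose t * t ! * ((x - j) * x.descFactorial (i + j - t))
          = i.choose t * j.choose t * t ! * x.descFactorial (i + j + 1 - t)
            + i.choose t * j.choose t * t ! * (i - t) * x.descFactorial (i + j - t) := by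
      intro t ht
      rcases Nat.lt_or_ge i t with hit | hit
      · simp [Nat.choose_eq_zero_of_lt hit]
      · have htj : t ≤ j := by have := mem_range.mp ht; omega
        have h1 : i + j + 1 - t = (i + j - t) + 1 := by omega
        rcases Nat.lt_or_ge x (i + j - t) with hxm | hxm
        · rw [Nat.descFactorial_eq_zero_iff_lt.2 hxm, h1,
            Nat.descFactorial_eq_zero_iff_lt.2 (show x < i+j-t+1 by omega)]
          simp
        · have h2 : (x - j) * x.descFactorial (i+j-t)
              = x.descFactorial (i+j-t+1) + (i - t) * x.descFactorial (i+j-t) := by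
            rw [Nat.descFactorial_succ]
            have h3 : (x - (i+j-t)) * x.descFactorial (i+j-t)
                  + (i - t) * x.descFactorial (i+j-t)
                = ((x - (i+j-t)) + (i - t)) * x.descFactorial (i+j-t) := by
              rw [Nat.add_mul]
            rw [h3]
            congr 1
            omega
          rw [h2, h1]
          ring
    have hshift1 : ∑ t ∈ range (j+1),
        i.choose t * j.choose t * t ! * x.descFactorial (i + j + 1 - t)
        = ∑ s ∈ range j,
            i.choose (s+1) * j.choose (s+1) * (s+1)! * x.descFactorial (i + j - s)
          + x.descFactorial (i + j + 1) := by
      rw [Finset.sum_range_succ'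
        (fun t => i.choose t * j.choose t * t ! * x.descFactorial (i + j + 1 - t)) j]
      simp only [Nat.choose_zero_right, Nat.factorial_zero, one_mul, Nat.sub_zero, mul_one]
      congr 1
      exact Finset.sum_congr rfl fun s _ => by
        have h : i + j + 1 - (s+1) = i + j - s := by omega
        rw [h]
    have hlast : ∑ s ∈ range (j+1),
        i.choose (s+1) * j.choose (s+1) * (s+1)! * x.descFactorial (i + j - s)
        = ∑ s ∈ range j,
            i.choose (s+1) * j.choose (s+1) * (s+1)! * x.descFactorial (i + j - s) := by
      rw [Finset.sum_range_succ, Nat.choose_eq_zero_of_lt (show j < j+1 by omega)]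
      simp
    have hsplit : ∀ s ∈ range (j+1),
        i.choose (s+1) * (j+1).choose (s+1) * (s+1)! * x.descFactorial (i + (j+1) - (s+1))
          = i.choose (s+1) * j.choose (s+1) * (s+1)! * x.descFactorial (i + j - s)
            + i.choose s * j.choose s * s ! * (i - s) * x.descFactorial (i + j - s) := by
      intro s _
      have h4 : i + (j+1) - (s+1) = i + j - s := by omega
      have h5a : i.choose (s+1) * ((s+1) * s !) = i.choose (s+1) * (s+1) * s ! := by ring
      have h5 : i.choose (s+1) * (s+1)! = i.choose s * (i - s) * s ! := by
        rw [Nat.factorial_succ, h5a, Nat.choose_succ_right_eq]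
      rw [h4, Nat.choose_succ_succ j s]
      calc i.choose (s+1) * (j.choose s + j.choose (s+1)) * (s+1)! * x.descFactorial (i+j-s)
          = i.choose (s+1) * j.choose (s+1) * (s+1)! * x.descFactorial (i + j - s)
            + (i.choose (s+1) * (s+1)!) * j.choose s * x.descFactorial (i + j - s) := by
            ring
        _ = _ := by rw [h5]; ring
    calc x.descFactorial i * x.descFactorial (j+1)
        = (x - j) * (x.descFactorial i * x.descFactorial j) := by
          rw [Nat.descFactorial_succ]; ring
      _ = ∑ t ∈ range (j+1),
            i.choose t * j.choose t * t ! * ((x - j) * x.descFactorial (i + j - t)) := by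
          rw [descFactorial_mul x i j, Finset.mul_sum]
          exact Finset.sum_congr rfl fun t _ => by ring
      _ = ∑ t ∈ range (j+1), i.choose t * j.choose t * t ! * x.descFactorial (i + j + 1 - t)
          + ∑ t ∈ range (j+1),
              i.choose t * j.choose t * t ! * (i - t) * x.descFactorial (i + j - t) := by
          rw [← Finset.sum_add_distrib]
          exact Finset.sum_congr rfl hstep
      _ = ∑ s ∈ range (j+1),
            i.choose (s+1) * j.choose (s+1) * (s+1)! * x.descFactorial (i + j - s)
          + ∑ s ∈ range (j+1),
              i.choose s * j.choose s * s ! * (i - s) * x.descFactorial (i + j - s)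
          + x.descFactorial (i + j + 1) := by
          rw [hshift1, hlast]
          ring
      _ = ∑ s ∈ range (j+1),
            i.choose (s+1) * (j+1).choose (s+1) * (s+1)! * x.descFactorial (i + (j+1) - (s+1))
          + x.descFactorial (i + j + 1) := by
          rw [← Finset.sum_add_distrib]
          congr 1
          exact (Finset.sum_congr rfl hsplit).symm
      _ = ∑ t ∈ range (j+1+1), i.choose t * (j+1).choose t * t ! * x.descFactorial (i + (j+1) - t) := by
          rw [Finset.sum_range_succ'
            (fun t => i.choose t * (j+1).choose t * t ! * x.descFactorial (i + (j+1) - t)) (j+1)]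
          simp only [Nat.choose_zero_right, Nat.factorial_zero, one_mul, Nat.sub_zero, mul_one]
          congr 1


lemma descFactorial_coeff_unique (N : ℕ) (c d : ℕ → ℕ)
    (h : ∀ x : ℕ, ∑ m ∈ range N, c m * x.descFactorial m = ∑ m ∈ range N, d m * x.descFactorial m) :
    ∀ k, k < N → c k = d k := by
  intro k
  induction k using Nat.strong_induction_on with
  | _ k ih =>
    intro hkN
    have hx := h k
    have hsub : range (k+1) ⊆ range N := by
      intro m hm; rw [mem_range] at *; omega
    have hzero : ∀ (e : ℕ → ℕ), ∀ m ∈ range N, m ∉ range (k+1)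
        → e m * Nat.descFactorial k m = 0 := by
      intro e m _ hm2
      rw [Nat.descFactorial_eq_zero_iff_lt.2 (by rw [mem_range] at hm2; omega), mul_zero]
    rw [← Finset.sum_subset hsub (hzero c), ← Finset.sum_subset hsub (hzero d)] at hx
    rw [Finset.sum_range_succ, Finset.sum_range_succ] at hx
    have heq : ∑ m ∈ range k, c m * Nat.descFactorial k m
        = ∑ m ∈ range k, d m * Nat.descFactorial k m :=
      Finset.sum_congr rfl (fun m hm => by have hmk := mem_range.mp hm; rw [ih m hmk (by omega)])
    rw [heq] at hx
    have hker : c k * Nat.descFactorial k k = d k * Nat.descFactorial k k :=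
      Nat.add_left_cancel hx
    have hpos : 0 < Nat.descFactorial k k := by
      rw [Nat.descFactorial_self]; exact k.factorial_pos
    exact Nat.eq_of_mul_eq_mul_right hpos hker

lemma sum_swap4 (N : ℕ) (G : ℕ → ℕ → ℕ → ℕ → ℕ) :
    ∑ i ∈ range N, ∑ j ∈ range N, ∑ t ∈ range N, ∑ m ∈ range N, G i j t m
      = ∑ m ∈ range N, ∑ t ∈ range N, ∑ i ∈ range N, ∑ j ∈ range N, G i j t m :=
  calc ∑ i ∈ range N, ∑ j ∈ range N, ∑ t ∈ range N, ∑ m ∈ range N, G i j t m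
      = ∑ i ∈ range N, ∑ j ∈ range N, ∑ m ∈ range N, ∑ t ∈ range N, G i j t m :=
        Finset.sum_congr rfl fun _ _ => Finset.sum_congr rfl fun _ _ => Finset.sum_comm
    _ = ∑ i ∈ range N, ∑ m ∈ range N, ∑ j ∈ range N, ∑ t ∈ range N, G i j t m :=
        Finset.sum_congr rfl fun _ _ => Finset.sum_comm
    _ = ∑ m ∈ range N, ∑ i ∈ range N, ∑ j ∈ range N, ∑ t ∈ range N, G i j t m :=
        Finset.sum_comm
    _ = ∑ m ∈ range N, ∑ i ∈ range N, ∑ t ∈ range N, ∑ j ∈ range N, G i j t m :=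
        Finset.sum_congr rfl fun _ _ => Finset.sum_congr rfl fun _ _ => Finset.sum_comm
    _ = ∑ m ∈ range N, ∑ t ∈ range N, ∑ i ∈ range N, ∑ j ∈ range N, G i j t m :=
        Finset.sum_congr rfl fun _ _ => Finset.sum_comm

lemma stirling_add_eq (a b k : ℕ) (hk : k ≤ a + b) :
    stirling (a+b) k
      = ∑ t ∈ range (a+b+1), ∑ i ∈ range (a+b+1), ∑ j ∈ range (a+b+1),
          (if i + j = k + t then
            stirling a i * stirling b j * (i.choose t * j.choose t * t !) else 0) := by
  set N := a + b + 1 with hN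
  have hext : ∀ (m x : ℕ), m ≤ a + b →
      ∑ i ∈ range N, stirling m i * x.descFactorial i = x ^ m := by
    intro m x hm
    rw [← sum_stirling_descFactorial m x]
    symm
    refine Finset.sum_subset (by intro u hu; rw [mem_range] at *; omega) ?_
    intro u _ hu2
    rw [stirling_eq_zero_of_lt (by rw [mem_range] at hu2; omega), zero_mul]
  have main : ∀ x : ℕ,
      ∑ m ∈ range N, stirling (a+b) m * x.descFactorial m
        = ∑ m ∈ range N, (∑ t ∈ range N, ∑ i ∈ range N, ∑ j ∈ range N,
            (if i + j = m + t then
              stirling a i * stirling b j * (i.choose t * j.choose t * t !) else 0))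
            * x.descFactorial m := by
    intro x
    have hterm : ∀ i ∈ range N, ∀ j ∈ range N,
        (stirling a i * x.descFactorial i) * (stirling b j * x.descFactorial j)
          = ∑ t ∈ range N, ∑ m ∈ range N,
              (if i + j = m + t then
                stirling a i * stirling b j * (i.choose t * j.choose t * t !) else 0)
                * x.descFactorial m := by
      intro i hi j hj
      rw [mem_range] at hi hj
      have e1 : (stirling a i * x.descFactorial i) * (stirling b j * x.descFactorial j)
          = ∑ t ∈ range N,
              stirling a i * stirling b j * (i.choose t * j.choose t * t !)
                * x.descFactorial (i + j - t) := by
        calc (stirling a i * x.descFactorial i) * (stirling b j * x.descFactorial j)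
            = stirling a i * stirling b j * (x.descFactorial i * x.descFactorial j) := by ring
          _ = stirling a i * stirling b j * ∑ t ∈ range (j+1),
                i.choose t * j.choose t * t ! * x.descFactorial (i + j - t) := by
              rw [descFactorial_mul]
          _ = ∑ t ∈ range (j+1),
                stirling a i * stirling b j * (i.choose t * j.choose t * t !)
                  * x.descFactorial (i + j - t) := by
              rw [Finset.mul_sum]
              exact Finset.sum_congr rfl fun t _ => by ring
          _ = ∑ t ∈ range N,
                stirling a i * stirling b j * (i.choose t * j.choose t * t !)
                  * x.descFactorial (i + j - t) := by
              refine Finset.sum_subset (by intro u hu; rw [mem_range] at *; omega) ?_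
              intro u _ hu2
              rw [mem_range] at hu2
              rw [Nat.choose_eq_zero_of_lt (show j < u by omega)]
              simp
      rw [e1]
      refine Finset.sum_congr rfl fun t _ => ?_
      simp only [ite_mul, zero_mul]
      rcases Nat.eq_zero_or_pos
          (stirling a i * stirling b j * (i.choose t * j.choose t * t !)) with hC | hC
      · rw [hC]
        simp
      · have hjt : t ≤ j := by
          by_contra hc
          rw [Nat.choose_eq_zero_of_lt (show j < t by omega)] at hC
          simp at hC
        have hia : i ≤ a := by
          by_contra hc
          rw [stirling_eq_zero_of_lt (show a < i by omega)] at hC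
          simp at hC
        have hjb : j ≤ b := by
          by_contra hc
          rw [stirling_eq_zero_of_lt (show b < j by omega)] at hC
          simp at hC
        have hmem : i + j - t ∈ range N := by rw [mem_range]; omega
        have hcond : i + j = (i + j - t) + t := by omega
        refine Eq.symm ?_
        calc ∑ m ∈ range N, (if i + j = m + t then
                stirling a i * stirling b j * (i.choose t * j.choose t * t !)
                  * x.descFactorial m else 0)
            = (if i + j = (i + j - t) + t then
                stirling a i * stirling b j * (i.choose t * j.choose t * t !)
                  * x.descFactorial (i + j - t) else 0) :=
              Finset.sum_eq_single_of_mem _ hmem (fun m _ hm => if_neg (by omega))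
          _ = stirling a i * stirling b j * (i.choose t * j.choose t * t !)
                * x.descFactorial (i + j - t) := if_pos hcond
    calc ∑ m ∈ range N, stirling (a+b) m * x.descFactorial m
        = x ^ (a+b) := hext (a+b) x le_rfl
      _ = x ^ a * x ^ b := pow_add x a b
      _ = (∑ i ∈ range N, stirling a i * x.descFactorial i)
          * (∑ j ∈ range N, stirling b j * x.descFactorial j) := by
          rw [hext a x (by omega), hext b x (by omega)]
      _ = ∑ i ∈ range N, ∑ j ∈ range N,
            (stirling a i * x.descFactorial i) * (stirling b j * x.descFactorial j) := by
          rw [Finset.sum_mul_sum]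
      _ = ∑ i ∈ range N, ∑ j ∈ range N, ∑ t ∈ range N, ∑ m ∈ range N,
            (if i + j = m + t then
              stirling a i * stirling b j * (i.choose t * j.choose t * t !) else 0)
              * x.descFactorial m := by
          exact Finset.sum_congr rfl fun i hi => Finset.sum_congr rfl fun j hj => hterm i hi j hj
      _ = ∑ m ∈ range N, ∑ t ∈ range N, ∑ i ∈ range N, ∑ j ∈ range N,
            (if i + j = m + t then
              stirling a i * stirling b j * (i.choose t * j.choose t * t !) else 0)
              * x.descFactorial m := sum_swap4 N _
      _ = ∑ m ∈ range N, (∑ t ∈ range N, ∑ i ∈ range N, ∑ j ∈ range N,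
            (if i + j = m + t then
              stirling a i * stirling b j * (i.choose t * j.choose t * t !) else 0))
            * x.descFactorial m := by
          refine Finset.sum_congr rfl fun m _ => ?_
          rw [Finset.sum_mul]
          refine Finset.sum_congr rfl fun t _ => ?_
          rw [Finset.sum_mul]
          refine Finset.sum_congr rfl fun i _ => ?_
          rw [Finset.sum_mul]
  exact descFactorial_coeff_unique N _ _ main k (by omega)


lemma binDigitSum_def (n : ℕ) (hn : n ≠ 0) : binDigitSum n = n % 2 + binDigitSum (n / 2) := by
  unfold binDigitSum
  rw [Nat.digits_def' (by norm_num : (1:ℕ) < 2) (Nat.pos_of_ne_zero hn)]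
  simp

lemma binDigitSum_le (n : ℕ) : binDigitSum n ≤ n := Nat.digit_sum_le 2 n

lemma binDigitSum_pos (n : ℕ) (hn : n ≠ 0) : 0 < binDigitSum n := by
  induction n using Nat.strong_induction_on with
  | _ n ih =>
    rw [binDigitSum_def n hn]
    rcases Nat.eq_zero_or_pos (n % 2) with h | h
    · have h2 : n / 2 ≠ 0 := by omega
      have := ih (n / 2) (by omega) h2
      omega
    · omega

lemma binDigitSum_lt (n : ℕ) (hn : 2 ≤ n) : binDigitSum n < n := by
  rw [binDigitSum_def n (by omega)]
  have := binDigitSum_le (n / 2)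
  omega

lemma binDigitSum_two_mul (u : ℕ) : binDigitSum (2 * u) = binDigitSum u := by
  rcases Nat.eq_zero_or_pos u with rfl | hu
  · rfl
  · rw [binDigitSum_def (2 * u) (by omega)]
    have h1 : 2 * u % 2 = 0 := by omega
    have h2 : 2 * u / 2 = u := by omega
    rw [h1, h2, Nat.zero_add]

lemma binDigitSum_two_mul_add_one (u : ℕ) : binDigitSum (2 * u + 1) = binDigitSum u + 1 := by
  rw [binDigitSum_def (2 * u + 1) (by omega)]
  have h1 : (2 * u + 1) % 2 = 1 := by omega
  have h2 : (2 * u + 1) / 2 = u := by omega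
  rw [h1, h2, Nat.add_comm]

lemma binDigitSum_two_pow_add (e : ℕ) : ∀ b : ℕ, b < 2 ^ e →
    binDigitSum (2 ^ e + b) = 1 + binDigitSum b := by
  induction e with
  | zero =>
    intro b hb
    interval_cases b
    simp [binDigitSum]
  | succ e ih =>
    intro b hb
    have hpow : 2 ^ (e + 1) = 2 * 2 ^ e := by ring
    have hne : 2 ^ (e+1) + b ≠ 0 := by positivity
    rw [binDigitSum_def _ hne]
    have h1 : (2 ^ (e+1) + b) % 2 = b % 2 := by omega
    have h2 : (2 ^ (e+1) + b) / 2 = 2 ^ e + b / 2 := by omega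
    rw [h1, h2, ih (b / 2) (by omega)]
    rcases Nat.eq_zero_or_pos b with rfl | hbpos
    · simp
    · rw [binDigitSum_def b (by omega)]
      omega

lemma binDigitSum_two_pow (e : ℕ) : binDigitSum (2 ^ e) = 1 := by
  have := binDigitSum_two_pow_add e 0 (by positivity)
  simpa [binDigitSum] using this

-- ν₂(m!) + d m = m
lemma padicValNat_factorial_add_digitSum (m : ℕ) :
    padicValNat 2 (m !) + binDigitSum m = m := by
  haveI : Fact (Nat.Prime 2) := ⟨Nat.prime_two⟩
  have h := sub_one_mul_padicValNat_factorial (p := 2) m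
  have h2 : binDigitSum m ≤ m := binDigitSum_le m
  unfold binDigitSum at *
  omega

lemma digitSum_add_eq (u v : ℕ) :
    binDigitSum u + binDigitSum v
      = binDigitSum (u + v) + padicValNat 2 ((u + v).choose u) := by
  haveI : Fact (Nat.Prime 2) := ⟨Nat.prime_two⟩
  have hfac : (u+v).choose u * u ! * v ! = (u+v)! := by
    have h := Nat.choose_mul_factorial_mul_factorial (show u ≤ u + v by omega)
    rw [Nat.add_sub_cancel_left] at h
    exact h
  have hν : padicValNat 2 ((u+v).choose u) + padicValNat 2 (u !) + padicValNat 2 (v !)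
      = padicValNat 2 ((u+v)!) := by
    have hc : (u+v).choose u ≠ 0 := (Nat.choose_pos (show u ≤ u+v by omega)).ne'
    rw [← hfac, padicValNat.mul (mul_ne_zero hc (factorial_ne_zero u)) (factorial_ne_zero v),
      padicValNat.mul hc (factorial_ne_zero u)]
  have h1 := padicValNat_factorial_add_digitSum u
  have h2 := padicValNat_factorial_add_digitSum v
  have h3 := padicValNat_factorial_add_digitSum (u + v)
  omega

lemma binDigitSum_add_le (u v : ℕ) :
    binDigitSum (u + v) ≤ binDigitSum u + binDigitSum v := by
  have := digitSum_add_eq u v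
  omega

lemma kummer_dvd (i t : ℕ) (h : t ≤ i) :
    2 ^ (binDigitSum t + binDigitSum (i - t)) ∣ 2 ^ binDigitSum i * i.choose t := by
  have h1 := digitSum_add_eq t (i - t)
  have h2 : t + (i - t) = i := by omega
  rw [h2] at h1
  rw [h1, pow_add]
  exact mul_dvd_mul_left _ pow_padicValNat_dvd

lemma factorial_dvd_pow (t : ℕ) : 2 ^ t ∣ 2 ^ binDigitSum t * t ! := by
  have h := padicValNat_factorial_add_digitSum t
  have h2 : (2:ℕ) ^ t = 2 ^ binDigitSum t * 2 ^ padicValNat 2 (t !) := by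
    rw [← pow_add]
    congr 1
    omega
  rw [h2]
  exact mul_dvd_mul_left _ pow_padicValNat_dvd

lemma padicValNat_two_mul (u : ℕ) (hu : u ≠ 0) :
    padicValNat 2 (2 * u) = padicValNat 2 u + 1 := by
  haveI : Fact (Nat.Prime 2) := ⟨Nat.prime_two⟩
  rw [padicValNat.mul (by norm_num) hu, padicValNat.self (by norm_num)]
  omega

lemma padicValNat_odd (u : ℕ) : padicValNat 2 (2 * u + 1) = 0 :=
  padicValNat.eq_zero_of_not_dvd (by omega)

lemma binDigitSum_pred (s : ℕ) (hs : 1 ≤ s) :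
    binDigitSum (s - 1) + 1 = binDigitSum s + padicValNat 2 s := by
  induction s using Nat.strong_induction_on with
  | _ s ih =>
    rcases Nat.even_or_odd s with ⟨u, hu⟩ | ⟨u, hu⟩
    · have hu1 : 1 ≤ u := by omega
      have h2u : s = 2 * u := by omega
      have hpred : s - 1 = 2 * (u - 1) + 1 := by omega
      rw [hpred, binDigitSum_two_mul_add_one, h2u, binDigitSum_two_mul,
        padicValNat_two_mul u (by omega)]
      have := ih u (by omega) hu1
      omega
    · have h2u : s = 2 * u + 1 := by omega
      have hpred : s - 1 = 2 * u := by omega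
      rw [hpred, binDigitSum_two_mul, h2u, binDigitSum_two_mul_add_one, padicValNat_odd]

lemma term_dvd (a b i j t k : ℕ) (hti : t ≤ i) (htj : t ≤ j) (hijk : i + j = k + t)
    (hi : 2 ^ binDigitSum i ∣ 2 ^ binDigitSum a * stirling a i)
    (hj : 2 ^ binDigitSum j ∣ 2 ^ binDigitSum b * stirling b j) :
    2 ^ (binDigitSum (i - t) + binDigitSum (j - t) + t)
      ∣ 2 ^ (binDigitSum a + binDigitSum b)
        * (stirling a i * stirling b j * (i.choose t * j.choose t * t !)) := by
  have Ki := kummer_dvd i t hti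
  have Kj := kummer_dvd j t htj
  have F := factorial_dvd_pow t
  have big := mul_dvd_mul (mul_dvd_mul (mul_dvd_mul (mul_dvd_mul hi hj) Ki) Kj) F
  have big2 : 2 ^ (binDigitSum i + binDigitSum j + binDigitSum t)
      * (2 ^ binDigitSum t * 2 ^ (binDigitSum (i - t) + binDigitSum (j - t) + t))
      ∣ 2 ^ (binDigitSum i + binDigitSum j + binDigitSum t)
      * (2 ^ (binDigitSum a + binDigitSum b)
          * (stirling a i * stirling b j * (i.choose t * j.choose t * t !))) := by
    calc 2 ^ (binDigitSum i + binDigitSum j + binDigitSum t)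
          * (2 ^ binDigitSum t * 2 ^ (binDigitSum (i - t) + binDigitSum (j - t) + t))
        = 2 ^ binDigitSum i * 2 ^ binDigitSum j
            * 2 ^ (binDigitSum t + binDigitSum (i - t))
            * 2 ^ (binDigitSum t + binDigitSum (j - t)) * 2 ^ t := by ring
      _ ∣ 2 ^ binDigitSum a * stirling a i * (2 ^ binDigitSum b * stirling b j)
            * (2 ^ binDigitSum i * i.choose t) * (2 ^ binDigitSum j * j.choose t)
            * (2 ^ binDigitSum t * t !) := big
      _ = 2 ^ (binDigitSum i + binDigitSum j + binDigitSum t)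
          * (2 ^ (binDigitSum a + binDigitSum b)
              * (stirling a i * stirling b j * (i.choose t * j.choose t * t !))) := by ring
  have big3 := (mul_dvd_mul_iff_left
    (pow_ne_zero (binDigitSum i + binDigitSum j + binDigitSum t) (two_ne_zero))).mp big2
  exact dvd_trans (dvd_mul_left _ _) big3

lemma sum_sym_split (N : ℕ) (h : ℕ → ℕ → ℕ) (hsym : ∀ i j, h i j = h j i) :
    ∑ i ∈ range N, ∑ j ∈ range N, h i j
      = 2 * (∑ i ∈ range N, ∑ j ∈ range i, h i j) + ∑ i ∈ range N, h i i := by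
  induction N with
  | zero => simp
  | succ N ih =>
    rw [Finset.sum_range_succ (fun i => ∑ j ∈ range (N+1), h i j) N]
    have hsplit : ∑ i ∈ range N, ∑ j ∈ range (N+1), h i j
        = ∑ i ∈ range N, ∑ j ∈ range N, h i j + ∑ i ∈ range N, h i N := by
      rw [← Finset.sum_add_distrib]
      exact Finset.sum_congr rfl fun i _ => Finset.sum_range_succ (h i) N
    rw [hsplit, ih,
      Finset.sum_range_succ (h N) N,
      Finset.sum_range_succ (fun i => ∑ j ∈ range i, h i j) N,
      Finset.sum_range_succ (fun i => h i i) N]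
    have hNsym : ∑ i ∈ range N, h i N = ∑ j ∈ range N, h N j :=
      Finset.sum_congr rfl fun i _ => hsym i N
    rw [hNsym]
    ring

lemma core_dvd : ∀ n : ℕ, 1 ≤ n → ∀ k : ℕ,
    2 ^ binDigitSum k ∣ 2 ^ binDigitSum n * stirling n k := by
  intro n
  induction n using Nat.strong_induction_on with
  | _ n ih =>
    intro hn k
    rcases Nat.lt_or_ge n k with hnk | hkn
    · rw [stirling_eq_zero_of_lt hnk, mul_zero]; exact dvd_zero _
    rcases Nat.eq_zero_or_pos k with rfl | hk
    · obtain ⟨m, rfl⟩ : ∃ m, n = m + 1 := ⟨n - 1, by omega⟩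
      rw [show stirling (m+1) 0 = 0 from rfl, mul_zero]
      exact dvd_zero _
    rcases eq_or_ne n 1 with rfl | hn1
    · have hk1 : k = 1 := by omega
      subst hk1
      rw [show stirling 1 1 = 1 from rfl, mul_one]
    have hn2 : 2 ≤ n := by omega
    have he1 : 1 ≤ Nat.log 2 n := by
      rw [Nat.le_log_iff_pow_le (by norm_num) (by omega)]
      omega
    set e := Nat.log 2 n with he
    have hlow : 2 ^ e ≤ n := Nat.pow_log_le_self 2 (by omega)
    have hhigh : n < 2 ^ (e + 1) := Nat.lt_pow_succ_log_self (by norm_num) n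
    have hpow2 : 2 ^ (e + 1) = 2 * 2 ^ e := by ring
    rcases eq_or_ne n (2 ^ e) with hpow | hpow
    · -- Branch B : n = 2^e a power of two
      set a := 2 ^ (e - 1) with ha
      have haa : n = a + a := by
        rw [hpow, ha, ← two_mul, ← _root_.pow_succ']
        congr 1
        omega
      have ha1 : 1 ≤ a := Nat.one_le_two_pow
      have han : a < n := by rw [haa]; omega
      have hda : binDigitSum a = 1 := binDigitSum_two_pow (e-1)
      have hdn : binDigitSum n = 1 := by rw [hpow]; exact binDigitSum_two_pow e
      have hfour : (4 : ℕ) = 2 ^ (binDigitSum a + binDigitSum a) := by rw [hda]; norm_num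
      -- the uniform claim
      have claim : 2 ^ (binDigitSum k + 1) ∣ 4 * stirling (a + a) k := by
        rw [stirling_add_eq a a k (by omega), Finset.mul_sum]
        refine Finset.dvd_sum fun t _ => ?_
        by_cases ht2 : 2 ≤ t
        · -- termwise
          rw [Finset.mul_sum]
          refine Finset.dvd_sum fun i _ => ?_
          rw [Finset.mul_sum]
          refine Finset.dvd_sum fun j _ => ?_
          by_cases hcond : i + j = k + t
          · rcases Nat.lt_or_ge i t with hti | hti
            · rw [if_pos hcond, Nat.choose_eq_zero_of_lt hti]
              simp
            rcases Nat.lt_or_ge j t with htj | htj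
            · rw [if_pos hcond, Nat.choose_eq_zero_of_lt htj]
              simp
            have G := term_dvd a a i j t k hti htj hcond
              (ih a han ha1 i) (ih a han ha1 j)
            have hdk : binDigitSum k + 1 ≤ binDigitSum (i-t) + binDigitSum (j-t) + t := by
              have e1 : k = (i - t) + j := by omega
              have e2 : j = (j - t) + t := by omega
              have l1 := binDigitSum_add_le (i-t) j
              have l2 := binDigitSum_add_le (j-t) t
              have l3 := binDigitSum_lt t ht2
              rw [← e1] at l1
              rw [← e2] at l2
              omega
            rw [if_pos hcond, hfour]
            exact dvd_trans (pow_dvd_pow 2 hdk) G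
          · rw [if_neg hcond, mul_zero]
            exact dvd_zero _
        · -- t ≤ 1 : symmetric pairing
          have hsym : ∀ i j : ℕ,
              (if i + j = k + t then
                stirling a i * stirling a j * (i.choose t * j.choose t * t !) else 0)
              = (if j + i = k + t then
                stirling a j * stirling a i * (j.choose t * i.choose t * t !) else 0) := by
            intro i j
            by_cases hc : i + j = k + t
            · rw [if_pos hc, if_pos (by omega)]
              ring
            · rw [if_neg hc, if_neg (by omega)]
          have hre := sum_sym_split (a+a+1)
            (fun i j => if i + j = k + t then
              stirling a i * stirling a j * (i.choose t * j.choose t * t !) else 0)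
            hsym
          rw [hre, Nat.mul_add]
          -- per-term bound for all valid (i,j) pairs : 2^dk ∣ 4 * term
          have hpair : ∀ i j : ℕ, 2 ^ binDigitSum k ∣
              4 * (if i + j = k + t then
                stirling a i * stirling a j * (i.choose t * j.choose t * t !) else 0) := by
            intro i j
            by_cases hcond : i + j = k + t
            · rcases Nat.lt_or_ge i t with hti | hti
              · rw [if_pos hcond, Nat.choose_eq_zero_of_lt hti]
                simp
              rcases Nat.lt_or_ge j t with htj | htj
              · rw [if_pos hcond, Nat.choose_eq_zero_of_lt htj]
                simp
              have G := term_dvd a a i j t k hti htj hcond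
                (ih a han ha1 i) (ih a han ha1 j)
              have hdk : binDigitSum k ≤ binDigitSum (i-t) + binDigitSum (j-t) + t := by
                have e1 : k = (i - t) + j := by omega
                have e2 : j = (j - t) + t := by omega
                have l1 := binDigitSum_add_le (i-t) j
                have l2 := binDigitSum_add_le (j-t) t
                have l3 := binDigitSum_le t
                rw [← e1] at l1
                rw [← e2] at l2
                omega
              rw [if_pos hcond, hfour]
              exact dvd_trans (pow_dvd_pow 2 hdk) G
            · rw [if_neg hcond, mul_zero]
              exact dvd_zero _
          refine dvd_add ?_ ?_
          · -- 4 * (2 * offdiag)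
            have h1 : 2 ^ binDigitSum k ∣
                4 * ∑ i ∈ range (a+a+1), ∑ j ∈ range i,
                  (if i + j = k + t then
                    stirling a i * stirling a j * (i.choose t * j.choose t * t !) else 0) := by
              rw [Finset.mul_sum]
              refine Finset.dvd_sum fun i _ => ?_
              rw [Finset.mul_sum]
              refine Finset.dvd_sum fun j _ => ?_
              exact hpair i j
            calc 2 ^ (binDigitSum k + 1) = 2 * 2 ^ binDigitSum k := by ring
              _ ∣ 2 * (4 * ∑ i ∈ range (a+a+1), ∑ j ∈ range i,
                  (if i + j = k + t then
                    stirling a i * stirling a j * (i.choose t * j.choose t * t !) else 0)) :=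
                mul_dvd_mul_left 2 h1
              _ = 4 * (2 * ∑ i ∈ range (a+a+1), ∑ j ∈ range i,
                  (if i + j = k + t then
                    stirling a i * stirling a j * (i.choose t * j.choose t * t !) else 0)) := by
                ring
          · -- diagonal
            rw [Finset.mul_sum]
            refine Finset.dvd_sum fun i _ => ?_
            by_cases hcond : i + i = k + t
            · have hi1 : 1 ≤ i := by omega
              have hdi : 1 ≤ binDigitSum i := binDigitSum_pos i (by omega)
              have hIH := ih a han ha1 i
              rw [hda, pow_one] at hIH
              interval_cases t
              · -- t = 0
                have hki : k = 2 * i := by omega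
                have hdk2 : binDigitSum k = binDigitSum i := by
                  rw [hki, binDigitSum_two_mul]
                rw [if_pos hcond]
                have hsq : 2 ^ (binDigitSum i + binDigitSum i)
                    ∣ (2 * stirling a i) * (2 * stirling a i) := by
                  rw [pow_add]
                  exact mul_dvd_mul hIH hIH
                have heq : (2 * stirling a i) * (2 * stirling a i)
                    = 4 * (stirling a i * stirling a i
                        * (i.choose 0 * i.choose 0 * 0!)) := by
                  simp [Nat.choose_zero_right]
                  ring
                rw [heq] at hsq
                exact dvd_trans (pow_dvd_pow 2 (by omega)) hsq
              · -- t = 1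
                have hki : k = 2 * (i - 1) + 1 := by omega
                have hv := binDigitSum_pred i hi1
                have hdk2 : binDigitSum k = binDigitSum i + padicValNat 2 i := by
                  rw [hki, binDigitSum_two_mul_add_one]
                  omega
                rw [if_pos hcond]
                have hvd : (2:ℕ) ^ padicValNat 2 i ∣ i := pow_padicValNat_dvd
                have hsq : 2 ^ (binDigitSum i + binDigitSum i
                      + (padicValNat 2 i + padicValNat 2 i))
                    ∣ (2 * stirling a i) * (2 * stirling a i) * (i * i) := by
                  rw [pow_add, pow_add, pow_add]
                  exact mul_dvd_mul (mul_dvd_mul hIH hIH) (mul_dvd_mul hvd hvd)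
                have heq : (2 * stirling a i) * (2 * stirling a i) * (i * i)
                    = 4 * (stirling a i * stirling a i
                        * (i.choose 1 * i.choose 1 * 1!)) := by
                  simp [Nat.choose_one_right]
                  ring
                rw [heq] at hsq
                exact dvd_trans (pow_dvd_pow 2 (by omega)) hsq
            · rw [if_neg hcond, mul_zero]
              exact dvd_zero _
      -- conclude branch B
      have hdn' : binDigitSum (a+a) = 1 := by rw [← haa]; exact hdn
      rw [haa, hdn', pow_one]
      have h2 : 2 * 2 ^ binDigitSum k ∣ 2 * (2 * stirling (a+a) k) := by
        calc 2 * 2 ^ binDigitSum k = 2 ^ (binDigitSum k + 1) := by ring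
          _ ∣ 4 * stirling (a+a) k := claim
          _ = 2 * (2 * stirling (a+a) k) := by ring
      exact (mul_dvd_mul_iff_left (two_ne_zero)).mp h2
    · -- Branch A : n not a power of two
      set a := 2 ^ e with ha
      set b := n - a with hb
      have hab : n = a + b := by omega
      have hb1 : 1 ≤ b := by omega
      have hba : b < 2 ^ e := by omega
      have ha1 : 1 ≤ a := Nat.one_le_two_pow
      have han : a < n := by omega
      have hbn : b < n := by omega
      have hdn : binDigitSum n = binDigitSum a + binDigitSum b := by
        rw [hab, binDigitSum_two_pow_add e b hba, binDigitSum_two_pow]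
      have hdn' : binDigitSum (a+b) = binDigitSum a + binDigitSum b := by
        rw [← hab]; exact hdn
      rw [hab, hdn', stirling_add_eq a b k (by omega), Finset.mul_sum]
      refine Finset.dvd_sum fun t _ => ?_
      rw [Finset.mul_sum]
      refine Finset.dvd_sum fun i _ => ?_
      rw [Finset.mul_sum]
      refine Finset.dvd_sum fun j _ => ?_
      by_cases hcond : i + j = k + t
      · rcases Nat.lt_or_ge i t with hti | hti
        · rw [if_pos hcond, Nat.choose_eq_zero_of_lt hti]
          simp
        rcases Nat.lt_or_ge j t with htj | htj
        · rw [if_pos hcond, Nat.choose_eq_zero_of_lt htj]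
          simp
        have G := term_dvd a b i j t k hti htj hcond
          (ih a han ha1 i) (ih b hbn hb1 j)
        have hdk : binDigitSum k ≤ binDigitSum (i-t) + binDigitSum (j-t) + t := by
          have e1 : k = (i - t) + j := by omega
          have e2 : j = (j - t) + t := by omega
          have l1 := binDigitSum_add_le (i-t) j
          have l2 := binDigitSum_add_le (j-t) t
          have l3 := binDigitSum_le t
          rw [← e1] at l1
          rw [← e2] at l2
          omega
        rw [if_pos hcond]
        exact dvd_trans (pow_dvd_pow 2 hdk) G
      · rw [if_neg hcond, mul_zero]
        exact dvd_zero _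

/-- For `0 < k ≤ n`, the 2-adic valuation of `S(n,k)` is at least `d(k) - d(n)`. -/
theorem stmt_0 (n k : ℕ) (hk : 0 < k) (hkn : k ≤ n) :
    (binDigitSum k : ℤ) - binDigitSum n ≤ (padicValNat 2 (stirling n k) : ℤ) := by
  haveI : Fact (Nat.Prime 2) := ⟨Nat.prime_two⟩
  have h := core_dvd n (by omega) k
  have hS : stirling n k ≠ 0 := (stirling_pos hk hkn).ne'
  have hne : 2 ^ binDigitSum n * stirling n k ≠ 0 :=
    mul_ne_zero (pow_ne_zero _ two_ne_zero) hS
  have hle : binDigitSum k ≤ padicValNat 2 (2 ^ binDigitSum n * stirling n k) := by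
    rw [← Nat.factorization_def _ Nat.prime_two]
    exact (Nat.Prime.pow_dvd_iff_le_factorization Nat.prime_two hne).mp h
  rw [padicValNat.mul (pow_ne_zero _ two_ne_zero) hS, padicValNat.prime_pow] at hle
  omega
end

section
/- In the ℤ-algebra B = ℤ[X₁,…,X_p]/(Xᵢ² − 2Xᵢ), for natural numbers 1 ≤ p ≤ q, the coefficient of the basis element Y_{{1,…,p}} in the expansion of (Σᵢ₌₁^p Y_{{i}})^q in the basis {Y_J} equals 2^{q−p} · p! · S(q,p), where S(q,p) is the Stirling number of the second kind. -/
open MvPolynomial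

/-- The ideal `(X₁² − 2X₁, …, X_p² − 2X_p)` of `ℤ[X₁,…,X_p]`. -/
noncomputable def relIdeal (p : ℕ) : Ideal (MvPolynomial (Fin p) ℤ) :=
  Ideal.span {P | ∃ i : Fin p, P = X i ^ 2 - 2 * X i}

lemma stirling_eq_zero {n k : ℕ} (h : n < k) : stirling n k = 0 := by
  induction n generalizing k with
  | zero => cases k with
    | zero => omega
    | succ k => rfl
  | succ n ih => cases k with
    | zero => omega
    | succ k =>
      have h1 : n < k := by omega
      simp [stirling, ih h1, ih (show n < k + 1 by omega)]

lemma stirling_self (n : ℕ) : stirling n n = 1 := by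
  induction n with
  | zero => rfl
  | succ n ih => simp [stirling, ih, stirling_eq_zero (show n < n + 1 by omega)]

lemma arith (q k : ℕ) (hk : 1 ≤ k) :
    k * (2 * (2 ^ (q - k) * k.factorial * stirling q k)
        + 2 ^ (q - (k - 1)) * (k - 1).factorial * stirling q (k - 1)) =
      2 ^ (q + 1 - k) * k.factorial * stirling (q + 1) k := by
  obtain ⟨m, rfl⟩ : ∃ m, k = m + 1 := ⟨k - 1, by omega⟩
  simp only [Nat.add_sub_cancel]
  rcases lt_trichotomy (m + 1) (q + 1) with h | h | h
  · have h1 : q - m = (q - (m + 1)) + 1 := by omega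
    have h2 : q + 1 - (m + 1) = (q - (m + 1)) + 1 := by omega
    rw [h1, h2, show stirling (q+1) (m+1) = stirling q m + (m+1) * stirling q (m+1) from rfl,
      Nat.factorial_succ]
    ring
  · obtain rfl : q = m := by omega
    rw [show q + 1 - (q + 1) = 0 from by omega, show q - (q+1) = 0 from by omega, show q - q = 0 from by omega,
      stirling_self, stirling_self, stirling_eq_zero (show q < q + 1 by omega),
      Nat.factorial_succ]
    ring
  · rw [stirling_eq_zero (show q < m + 1 by omega), stirling_eq_zero (show q < m by omega),
      stirling_eq_zero (show q + 1 < m + 1 by omega)]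
    ring

lemma mul_X_mem (p : ℕ) (S : Finset (Fin p)) (i : Fin p) (h : i ∈ S) :
    Ideal.Quotient.mk (relIdeal p) ((∏ j ∈ S, X j) * X i) =
    Ideal.Quotient.mk (relIdeal p) (2 * ∏ j ∈ S, X j) := by
  rw [Ideal.Quotient.eq]
  have h1 : (∏ j ∈ S, X j) = X i * ∏ j ∈ S.erase i, X j := (Finset.mul_prod_erase S (fun j => (X j : MvPolynomial (Fin p) ℤ)) h).symm
  have h2 : (∏ j ∈ S, X j) * X i - (2 : MvPolynomial (Fin p) ℤ) * ∏ j ∈ S, X j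
      = (X i ^ 2 - 2 * X i) * ∏ j ∈ S.erase i, X j := by rw [h1]; ring
  rw [h2]
  exact Ideal.mul_mem_right _ _ (Ideal.subset_span ⟨i, rfl⟩)

lemma basis_mul_X (p : ℕ)
    (b : Module.Basis (Finset (Fin p)) ℤ (MvPolynomial (Fin p) ℤ ⧸ relIdeal p))
    (hb : ∀ J : Finset (Fin p),
      b J = Ideal.Quotient.mk (relIdeal p) (∏ j ∈ J, X j))
    (S : Finset (Fin p)) (i : Fin p) :
    b S * Ideal.Quotient.mk (relIdeal p) (X i) =
      if i ∈ S then (2 : ℤ) • b S else b (insert i S) := by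
  split_ifs with h
  · rw [hb, ← map_mul, mul_X_mem p S i h, map_mul, map_ofNat]
    rw [zsmul_eq_mul]
    norm_num
  · rw [hb, hb, ← map_mul, Finset.prod_insert h, mul_comm]

set_option synthInstance.maxHeartbeats 1000000 in
lemma key (p : ℕ)
    (b : Module.Basis (Finset (Fin p)) ℤ (MvPolynomial (Fin p) ℤ ⧸ relIdeal p))
    (hb : ∀ J : Finset (Fin p),
      b J = Ideal.Quotient.mk (relIdeal p) (∏ j ∈ J, X j))
    (q : ℕ) (S : Finset (Fin p)) :
    b.repr ((∑ i : Fin p, Ideal.Quotient.mk (relIdeal p) (X i)) ^ q) S =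
      2 ^ (q - S.card) * S.card.factorial * stirling q S.card := by
  induction q generalizing S with
  | zero =>
    have h1 : ((1 : MvPolynomial (Fin p) ℤ ⧸ relIdeal p)) = b ∅ := by
      rw [hb]; simp
    rw [pow_zero, h1, b.repr_self, Finsupp.single_apply]
    rcases eq_or_ne S ∅ with rfl | hS
    · simp [stirling]
    · obtain ⟨m, hm⟩ : ∃ m, S.card = m + 1 :=
        ⟨S.card - 1, by
          have := Finset.card_pos.mpr (Finset.nonempty_iff_ne_empty.mpr hS); omega⟩
      rw [if_neg (Ne.symm hS), hm]
      simp [stirling]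
  | succ q ih =>
    set x : MvPolynomial (Fin p) ℤ ⧸ relIdeal p :=
      ∑ i : Fin p, Ideal.Quotient.mk (relIdeal p) (X i) with hxdef
    set c : Finset (Fin p) → ℤ := fun J => b.repr (x ^ q) J with hc
    have hx : x ^ (q + 1) = ∑ J : Finset (Fin p), ∑ i : Fin p,
        c J • (b J * Ideal.Quotient.mk (relIdeal p) (X i)) := by
      calc x ^ (q + 1) = (∑ J : Finset (Fin p), c J • b J) * x := by
            rw [b.sum_repr (x ^ q), pow_succ]
        _ = _ := by
            rw [Finset.sum_mul]
            refine Finset.sum_congr rfl fun J _ => ?_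
            rw [smul_mul_assoc, hxdef, Finset.mul_sum, Finset.smul_sum]
    have hd : ∀ J : Finset (Fin p), ∀ i : Fin p,
        b.repr (b J * Ideal.Quotient.mk (relIdeal p) (X i)) S =
          if i ∈ J then (if J = S then 2 else 0)
          else (if insert i J = S then 1 else 0) := by
      intro J i
      rw [basis_mul_X p b hb J i]
      by_cases h : i ∈ J
      · rw [if_pos h, if_pos h, map_smul, Finsupp.smul_apply, b.repr_self,
          Finsupp.single_apply]
        by_cases h2 : J = S <;> simp [h2]
      · rw [if_neg h, if_neg h, b.repr_self, Finsupp.single_apply]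
    have hmain : b.repr (x ^ (q + 1)) S = ∑ J : Finset (Fin p), ∑ i : Fin p,
        c J * (if i ∈ J then (if J = S then 2 else 0)
          else (if insert i J = S then 1 else 0)) := by
      rw [hx, map_sum]
      rw [Finsupp.coe_finset_sum, Finset.sum_apply]
      refine Finset.sum_congr rfl fun J _ => ?_
      rw [map_sum, Finsupp.coe_finset_sum, Finset.sum_apply]
      refine Finset.sum_congr rfl fun i _ => ?_
      rw [map_smul, Finsupp.smul_apply, hd J i, smul_eq_mul]
    rw [hmain, Finset.sum_comm]
    have hinner : ∀ i : Fin p,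
        (∑ J : Finset (Fin p),
          c J * (if i ∈ J then (if J = S then 2 else 0)
            else (if insert i J = S then 1 else 0))) =
          if i ∈ S then 2 * c S + c (S.erase i) else 0 := by
      intro i
      by_cases hi : i ∈ S
      · have hterm : ∀ J : Finset (Fin p),
            c J * (if i ∈ J then (if J = S then 2 else 0)
              else (if insert i J = S then 1 else 0)) =
            (if J = S then 2 * c J else 0) + (if J = S.erase i then c J else 0) := by
          intro J
          by_cases h1 : J = S
          · have h5 : i ∈ J := h1.symm ▸ hi
            have h8 : S ≠ S.erase i := fun h => (Finset.erase_eq_self.mp h.symm) hi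
            simp only [h1, h5, if_pos, hi, if_neg h8, if_true]
            ring
          · by_cases h2 : J = S.erase i
            · subst h2
              have h3 : i ∉ S.erase i := Finset.notMem_erase i S
              have h4 : insert i (S.erase i) = S := Finset.insert_erase hi
              simp [h3, h4, h1]
            · by_cases h5 : i ∈ J
              · simp [h5, h1, h2]
              · have h6 : insert i J ≠ S := by
                  intro h
                  apply h2
                  rw [← h, Finset.erase_insert h5]
                simp [h5, h6, h1, h2]
        rw [Finset.sum_congr rfl fun J _ => hterm J, Finset.sum_add_distrib,
          Finset.sum_ite_eq' Finset.univ S (fun J => 2 * c J),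
          Finset.sum_ite_eq' Finset.univ (S.erase i) c]
        simp [hi]
      · have hterm : ∀ J : Finset (Fin p),
            c J * (if i ∈ J then (if J = S then 2 else 0)
              else (if insert i J = S then 1 else 0)) = 0 := by
          intro J
          by_cases h5 : i ∈ J
          · have h1 : J ≠ S := fun h => hi (h ▸ h5)
            simp [h5, h1]
          · have h6 : insert i J ≠ S := fun h => hi (h ▸ Finset.mem_insert_self i J)
            simp [h5, h6]
        rw [Finset.sum_congr rfl fun J _ => hterm J]
        simp [hi]
    rw [Finset.sum_congr rfl fun i _ => hinner i]
    rw [Finset.sum_ite_mem, Finset.univ_inter]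
    rcases eq_or_ne S ∅ with rfl | hS
    · have : stirling (q + 1) 0 = 0 := rfl
      simp [this]
    · have hk : 1 ≤ S.card := Finset.card_pos.mpr (Finset.nonempty_iff_ne_empty.mpr hS)
      have hcard : ∀ i ∈ S, (S.erase i).card = S.card - 1 := fun i hi =>
        Finset.card_erase_of_mem hi
      have hconst : ∀ i ∈ S, 2 * c S + c (S.erase i) =
          2 * (2 ^ (q - S.card) * S.card.factorial * stirling q S.card)
            + 2 ^ (q - (S.card - 1)) * (S.card - 1).factorial * stirling q (S.card - 1) := by
        intro i hi
        rw [hc]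
        simp only []
        rw [ih S, ih (S.erase i), hcard i hi]
      rw [Finset.sum_congr rfl hconst, Finset.sum_const, nsmul_eq_mul]
      exact_mod_cast arith q S.card hk

/-- In `B = ℤ[X₁,…,X_p]/(Xᵢ² − 2Xᵢ)`, for `1 ≤ p ≤ q`, the coefficient of the top
basis element `Y_{{1,…,p}}` in the expansion of `(Σᵢ Y_{{i}})^q` in the
squarefree-monomial basis `{Y_J}` is `2^{q−p}·p!·S(q,p)`. -/
theorem stmt_9 (p q : ℕ) (hp : 1 ≤ p) (hpq : p ≤ q)
    (b : Module.Basis (Finset (Fin p)) ℤ (MvPolynomial (Fin p) ℤ ⧸ relIdeal p))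
    (hb : ∀ J : Finset (Fin p),
      b J = Ideal.Quotient.mk (relIdeal p) (∏ j ∈ J, X j)) :
    b.repr ((∑ i : Fin p, Ideal.Quotient.mk (relIdeal p) (X i)) ^ q)
        Finset.univ =
      2 ^ (q - p) * Nat.factorial p * stirling q p := by
  rw [key p b hb q Finset.univ, Finset.card_univ, Fintype.card_fin]
end

section
/- Let q, j, i, n, r be natural numbers with 1 ≤ j ≤ q ≤ 2i, n even and positive, and r − ν₂((2i)!) ≥ 0. Then ν₂(2^{q−j} · j! · S(q,j) · C(2i,q) · n^{2i−q} · 2^{r−ν₂((2i)!)}) ≥ r, where S denotes Stirling numbers of the second kind, C the binomial coefficient, and ν₂ the 2-adic valuation. -/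
/-- forward difference operator -/
def fd (f : ℤ → ℤ) : ℤ → ℤ := fun x => f (x + 1) - f x

lemma fdS' (f : ℤ → ℤ) (k : ℕ) (x : ℤ) :
    fd^[k + 1] f x = fd^[k] f (x + 1) - fd^[k] f x := by
  rw [Function.iterate_succ_apply']; rfl

lemma fd_zero_iter (m : ℕ) : fd^[m] (fun _ => (0 : ℤ)) = fun _ => 0 := by
  induction m with
  | zero => rfl
  | succ m ih => rw [Function.iterate_succ_apply, show fd (fun _ => (0:ℤ)) = fun _ => 0 by
      funext x; simp [fd], ih]

lemma fd_const (c : ℤ) : fd (fun _ => c) = fun _ => 0 := by funext x; simp [fd]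

lemma fd_id : fd (fun t => t) = fun _ => (1 : ℤ) := by funext x; simp [fd]

/-- Leibniz rule for iterated finite differences. -/
lemma fd_leibniz (f g : ℤ → ℤ) (k : ℕ) (x : ℤ) :
    fd^[k] (fun t => f t * g t) x =
      ∑ i ∈ Finset.range (k + 1),
        (Nat.choose k i : ℤ) * fd^[i] f x * fd^[k - i] g (x + (i : ℕ)) := by
  induction k generalizing x with
  | zero => simp
  | succ k ih =>
    rw [fdS', ih, ih]
    have key : ∀ i ∈ Finset.range (k + 1),
        (Nat.choose k i : ℤ) * fd^[i] f (x+1) * fd^[k - i] g ((x+1) + (i:ℕ)) -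
          (Nat.choose k i : ℤ) * fd^[i] f x * fd^[k - i] g (x + (i:ℕ)) =
        ((Nat.choose k i : ℤ) * fd^[i+1] f x * fd^[(k+1) - (i+1)] g (x + ((i+1:ℕ) : ℕ))) +
        ((Nat.choose k i : ℤ) * fd^[i] f x * fd^[(k+1) - i] g (x + (i:ℕ))) := by
      intro i hi
      have hik : i ≤ k := Nat.lt_succ_iff.mp (Finset.mem_range.mp hi)
      have h1 : fd^[i] f (x + 1) = fd^[i] f x + fd^[i+1] f x := by
        rw [fdS']; ring
      have h2 : fd^[k - i] g ((x + (i:ℕ)) + 1) =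
          fd^[k - i] g (x + (i:ℕ)) + fd^[(k - i) + 1] g (x + (i:ℕ)) := by
        rw [fdS']; ring
      have e1 : (k+1) - (i+1) = k - i := by omega
      have e2 : (k - i) + 1 = (k+1) - i := by omega
      have e3 : ((x+1) + (i:ℕ)) = (x + (i:ℕ)) + 1 := by push_cast; ring
      have e4 : (x + ((i+1:ℕ):ℕ) : ℤ) = (x + (i:ℕ)) + 1 := by push_cast; ring
      rw [e1, e3, e4, h2, h1, ← e2]
      ring
    rw [← Finset.sum_sub_distrib, Finset.sum_congr rfl key, Finset.sum_add_distrib]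
    have pascal : ∀ i ∈ Finset.range (k+1),
        (Nat.choose (k+1) (i+1) : ℤ) * fd^[i+1] f x * fd^[(k+1)-(i+1)] g (x + ((i+1:ℕ):ℕ)) =
        (Nat.choose k i : ℤ) * fd^[i+1] f x * fd^[(k+1)-(i+1)] g (x + ((i+1:ℕ):ℕ)) +
        (Nat.choose k (i+1) : ℤ) * fd^[i+1] f x * fd^[(k+1)-(i+1)] g (x + ((i+1:ℕ):ℕ)) := by
      intro i hi
      rw [Nat.choose_succ_succ]
      push_cast; ring
    have hA := Finset.sum_range_succ' (fun i => (Nat.choose (k+1) i : ℤ) * fd^[i] f x *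
        fd^[(k+1) - i] g (x + (i:ℕ))) (k+1)
    have hA2 := Finset.sum_range_succ' (fun i => (Nat.choose k i : ℤ) * fd^[i] f x *
        fd^[(k+1) - i] g (x + (i:ℕ))) (k+1)
    have hB : ∑ i ∈ Finset.range (k+2),
        (Nat.choose k i : ℤ) * fd^[i] f x * fd^[(k+1) - i] g (x + (i:ℕ)) =
        ∑ i ∈ Finset.range (k+1),
        (Nat.choose k i : ℤ) * fd^[i] f x * fd^[(k+1) - i] g (x + (i:ℕ)) := by
      rw [Finset.sum_range_succ]
      simp [Nat.choose_succ_self]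
    rw [Finset.sum_congr rfl pascal, Finset.sum_add_distrib] at hA
    simp only [Nat.choose_zero_right, Nat.cast_one, Function.iterate_zero, id_eq,
      Nat.cast_zero, add_zero, Nat.sub_zero] at hA hA2 hB
    linarith [hA, hA2, hB]

/-- shift congruence: iterated differences at shifted points agree mod 2^m -/
lemma fd_shift_dvd (g : ℤ → ℤ) (Hg : ∀ m y, (2:ℤ)^(m - 1) ∣ fd^[m] g y) (m : ℕ) (s : ℕ) (y : ℤ) :
    (2:ℤ)^m ∣ fd^[m] g (y + (s:ℕ)) - fd^[m] g y := by
  induction s with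
  | zero => simp
  | succ s ih =>
    have h1 : fd^[m] g (y + ((s+1:ℕ):ℤ)) - fd^[m] g y =
        (fd^[m] g ((y + (s:ℕ)) + 1) - fd^[m] g (y + (s:ℕ))) + (fd^[m] g (y + (s:ℕ)) - fd^[m] g y) := by
      push_cast; ring_nf
    rw [h1, ← fdS']
    exact dvd_add (by simpa using Hg (m+1) (y + (s:ℕ))) ih

lemma two_dvd_central (a : ℕ) (ha : 1 ≤ a) : 2 ∣ Nat.choose (2*a) a := by
  obtain ⟨b, rfl⟩ := Nat.exists_eq_add_of_le ha
  have h : 2*(1+b) = (2*b+1) + 1 := by ring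
  rw [h, show 1 + b = b + 1 from by ring, Nat.choose_succ_succ]
  have hs : Nat.choose (2*b+1) b = Nat.choose (2*b+1) (b+1) := by
    have := Nat.choose_symm (n := 2*b+1) (k := b+1) (by omega)
    rwa [show 2*b+1 - (b+1) = b from by omega] at this
  rw [hs]
  simp only [Nat.succ_eq_add_one]
  omega

/-- squaring step -/
lemma fd_sq_dvd (g : ℤ → ℤ) (Hg : ∀ m y, (2:ℤ)^(m - 1) ∣ fd^[m] g y) (k : ℕ) (x : ℤ) :
    (2:ℤ)^(k - 1) ∣ fd^[k] (fun t => g t * g t) x := by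
  rw [fd_leibniz]
  set N : ℕ := 2^(k-1) with hN
  have hNZ : ((N:ℕ):ℤ) = (2:ℤ)^(k-1) := by rw [hN]; push_cast; ring
  have hcast : ∀ z : ℤ, ((N:ℤ) ∣ z) ↔ ((z : ZMod N) = 0) := by
    intro z; rw [ZMod.intCast_zmod_eq_zero_iff_dvd]
  rw [← hNZ, hcast, Int.cast_sum]
  set F : ℕ → ZMod N := fun i =>
    (((Nat.choose k i : ℤ) * fd^[i] g x * fd^[k-i] g (x + (i:ℕ)) : ℤ) : ZMod N) with hF
  show ∑ i ∈ Finset.range (k+1), F i = 0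
  have hfix : ∀ a, a ∈ Finset.range (k+1) → k - a = a → F a = 0 := by
    intro a ha hfa
    have hak : a ≤ k := Nat.lt_succ_iff.mp (Finset.mem_range.mp ha)
    have hk2a : k = 2*a := by omega
    have hdvd : (2:ℤ)^(k-1) ∣ (Nat.choose k a : ℤ) * fd^[a] g x * fd^[k-a] g (x + (a:ℕ)) := by
      rcases Nat.eq_zero_or_pos a with rfl | hapos
      · have hk0 : k = 0 := by omega
        subst hk0
        simpa using one_dvd _
      · have h1 : (2:ℤ)^(a-1) ∣ fd^[a] g x := Hg a x
        have h2 : (2:ℤ)^((k-a)-1) ∣ fd^[k-a] g (x + (a:ℕ)) := Hg (k-a) _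
        have hc : (2:ℤ) ∣ (Nat.choose k a : ℤ) := by
          rw [hk2a]; exact_mod_cast Int.natCast_dvd_natCast.mpr (two_dvd_central a hapos)
        have h3 : (2:ℤ)^(1 + (a-1) + ((k-a)-1)) ∣
            (Nat.choose k a : ℤ) * fd^[a] g x * fd^[k-a] g (x + (a:ℕ)) := by
          rw [pow_add, pow_add, pow_one]
          exact mul_dvd_mul (mul_dvd_mul hc h1) h2
        exact dvd_trans (pow_dvd_pow 2 (by omega)) h3
    rw [hF]
    show (((Nat.choose k a : ℤ) * fd^[a] g x * fd^[k-a] g (x + (a:ℕ)) : ℤ) : ZMod N) = 0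
    rw [← hcast, hNZ]
    exact hdvd
  have hpair : ∀ a, a ∈ Finset.range (k+1) → F a + F (k - a) = 0 := by
    intro a ha
    have hak : a ≤ k := Nat.lt_succ_iff.mp (Finset.mem_range.mp ha)
    have hsub : k - (k - a) = a := by omega
    have hdvd : (2:ℤ)^(k-1) ∣
        ((Nat.choose k a : ℤ) * fd^[a] g x * fd^[k-a] g (x + (a:ℕ)) +
         (Nat.choose k (k-a) : ℤ) * fd^[k-a] g x * fd^[a] g (x + ((k-a:ℕ):ℕ))) := by
      rw [Nat.choose_symm hak]
      set A := fd^[a] g x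
      set B := fd^[k-a] g x
      set A' := fd^[a] g (x + ((k-a:ℕ):ℕ))
      set B' := fd^[k-a] g (x + (a:ℕ))
      have hx : (Nat.choose k a : ℤ) * A * B' + (Nat.choose k a : ℤ) * B * A' =
          (Nat.choose k a : ℤ) * (2*A*B + A*(B'-B) + B*(A'-A)) := by ring
      rw [hx]
      apply Dvd.dvd.mul_left
      have d1 : (2:ℤ)^(k-1) ∣ 2*A*B := by
        have h3 : (2:ℤ)^(1 + (a-1) + ((k-a)-1)) ∣ 2*A*B := by
          rw [pow_add, pow_add]
          exact mul_dvd_mul (mul_dvd_mul (by norm_num) (Hg a x)) (Hg (k-a) x)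
        exact dvd_trans (pow_dvd_pow 2 (by omega)) h3
      have d2 : (2:ℤ)^(k-1) ∣ A*(B'-B) := by
        have h3 : (2:ℤ)^((a-1) + (k-a)) ∣ A*(B'-B) := by
          rw [pow_add]; exact mul_dvd_mul (Hg a x) (fd_shift_dvd g Hg (k-a) a x)
        exact dvd_trans (pow_dvd_pow 2 (by omega)) h3
      have d3 : (2:ℤ)^(k-1) ∣ B*(A'-A) := by
        have h3 : (2:ℤ)^(((k-a)-1) + a) ∣ B*(A'-A) := by
          rw [pow_add]; exact mul_dvd_mul (Hg (k-a) x) (fd_shift_dvd g Hg a (k-a) x)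
        exact dvd_trans (pow_dvd_pow 2 (by omega)) h3
      exact dvd_add (dvd_add d1 d2) d3
    rw [hF]
    show (((Nat.choose k a : ℤ) * fd^[a] g x * fd^[k-a] g (x + (a:ℕ)) : ℤ) : ZMod N) +
        (((Nat.choose k (k-a) : ℤ) * fd^[k-a] g x * fd^[k-(k-a)] g (x + ((k-a:ℕ):ℕ)) : ℤ) : ZMod N) = 0
    rw [hsub, ← Int.cast_add, ← hcast, hNZ]
    exact hdvd
  refine Finset.sum_involution (fun a _ => k - a) hpair ?_ ?_ ?_
  · intro a ha hne h
    exact hne (hfix a ha h)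
  · intro a ha
    show k - a ∈ Finset.range (k+1)
    exact Finset.mem_range.mpr (by omega)
  · intro a ha
    have hak : a ≤ k := Nat.lt_succ_iff.mp (Finset.mem_range.mp ha)
    show k - (k - a) = a
    omega

/-- key lemma for powers of two -/
lemma fd_pow_two_dvd (a : ℕ) : ∀ (k : ℕ) (x : ℤ), (2:ℤ)^(k - 1) ∣ fd^[k] (fun t => t^(2^a)) x := by
  induction a with
  | zero =>
    intro k x
    have h1 : (fun t : ℤ => t^(2^0)) = fun t => t := by funext t; simp
    rw [h1]
    match k with
    | 0 => simpa using one_dvd _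
    | 1 => simp [fd_id]
    | (m+2) =>
      have : fd^[m+2] (fun t : ℤ => t) = fun _ => 0 := by
        rw [Function.iterate_succ_apply, fd_id, Function.iterate_succ_apply, fd_const,
          fd_zero_iter]
      rw [this]
      simp
  | succ a ih =>
    intro k x
    have h1 : (fun t : ℤ => t^(2^(a+1))) = fun t => t^(2^a) * t^(2^a) := by
      funext t; rw [← pow_add]; ring_nf
    rw [h1]
    exact fd_sq_dvd _ (fun m y => ih m y) k x

/-- binary digit sum -/
def dsum (n : ℕ) : ℕ := (Nat.digits 2 n).sum

lemma dsum_rec (n : ℕ) (hn : 0 < n) : dsum n = n % 2 + dsum (n / 2) := by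
  unfold dsum
  rw [Nat.digits_def' (by norm_num) hn]
  simp

lemma dsum_le (n : ℕ) : dsum n ≤ n := by
  induction n using Nat.strong_induction_on with
  | _ n ih =>
    rcases Nat.eq_zero_or_pos n with rfl | hn
    · simp [dsum]
    · rw [dsum_rec n hn]
      have := ih (n / 2) (by omega)
      omega

lemma dsum_top_bit (a : ℕ) : ∀ q' : ℕ, q' < 2^a → dsum (2^a + q') = 1 + dsum q' := by
  induction a with
  | zero =>
    intro q' h
    interval_cases q'
    simp [dsum]
  | succ a ih =>
    intro q' h
    have hpos : 0 < 2^(a+1) + q' := by positivity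
    rw [dsum_rec _ hpos]
    have h1 : (2^(a+1) + q') % 2 = q' % 2 := by omega
    have h2 : (2^(a+1) + q') / 2 = 2^a + q'/2 := by omega
    rw [h1, h2, ih (q'/2) (by omega)]
    rcases Nat.eq_zero_or_pos q' with rfl | hq'
    · simp
    · rw [dsum_rec q' hq']
      omega

/-- general bound: 2-adic valuation of iterated differences of power functions -/
lemma fd_pow_dvd : ∀ (q k : ℕ) (x : ℤ), (2:ℤ)^(k - dsum q) ∣ fd^[k] (fun t => t^q) x := by
  intro q
  induction q using Nat.strong_induction_on with
  | _ q ih =>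
    intro k x
    rcases Nat.eq_zero_or_pos q with rfl | hq
    · have h1 : (fun t : ℤ => t^0) = fun _ => (1:ℤ) := by funext t; simp
      rw [h1]
      match k with
      | 0 => simpa using one_dvd _
      | (m+1) =>
        rw [Function.iterate_succ_apply, fd_const, fd_zero_iter]
        simp
    · set a := Nat.log 2 q with ha
      have h2a : 2^a ≤ q := Nat.pow_log_le_self 2 (by omega)
      have h2b : q < 2^(a+1) := Nat.lt_pow_succ_log_self (by norm_num) q
      set q' := q - 2^a with hq'
      have hqeq : q = 2^a + q' := by omega
      have hq'lt : q' < 2^a := by omega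
      have hd : dsum q = 1 + dsum q' := by rw [hqeq]; exact dsum_top_bit a q' hq'lt
      have h1 : (fun t : ℤ => t^q) = fun t => t^(2^a) * t^(q') := by
        funext t; rw [← pow_add, ← hqeq]
      rw [h1, fd_leibniz]
      apply Finset.dvd_sum
      intro i hi
      have hik : i ≤ k := Nat.lt_succ_iff.mp (Finset.mem_range.mp hi)
      have d1 : (2:ℤ)^(i-1) ∣ fd^[i] (fun t : ℤ => t^(2^a)) x := fd_pow_two_dvd a i x
      have d2 : (2:ℤ)^((k-i) - dsum q') ∣ fd^[k-i] (fun t : ℤ => t^(q')) (x + (i:ℕ)) :=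
        ih q' (by omega) (k-i) _
      have h3 : (2:ℤ)^((i-1) + ((k-i) - dsum q')) ∣
          (Nat.choose k i : ℤ) * fd^[i] (fun t : ℤ => t^(2^a)) x *
            fd^[k-i] (fun t : ℤ => t^(q')) (x + (i:ℕ)) := by
        rw [pow_add]
        exact mul_dvd_mul (Dvd.dvd.mul_left d1 _) d2
      refine dvd_trans (pow_dvd_pow 2 ?_) h3
      omega


lemma fd_pow_zero_eq (q : ℕ) : ∀ j : ℕ, fd^[j] (fun t : ℤ => t^q) 0 =
    ((Nat.factorial j * stirling q j : ℕ) : ℤ) := by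
  induction q with
  | zero =>
    intro j
    have h1 : (fun t : ℤ => t^0) = fun _ => (1:ℤ) := by funext t; simp
    rw [h1]
    match j with
    | 0 => simp [stirling]
    | (m+1) =>
      rw [Function.iterate_succ_apply, fd_const, fd_zero_iter]
      simp [stirling]
  | succ q ih =>
    intro j
    match j with
    | 0 =>
      simp [stirling]
    | (j'+1) =>
      have h1 : (fun t : ℤ => t^(q+1)) = fun t => t * t^q := by
        funext t; ring
      rw [h1, fd_leibniz]
      have hcollapse : ∀ i ∈ Finset.range (j'+1+1), i ≠ 1 →
          (Nat.choose (j'+1) i : ℤ) * fd^[i] (fun t : ℤ => t) 0 *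
            fd^[j'+1-i] (fun t : ℤ => t^q) ((0:ℤ) + (i:ℕ)) = 0 := by
        intro i hi hne
        match i, hne with
        | 0, _ => simp
        | (m+2), _ =>
          have hz : fd^[m+2] (fun t : ℤ => t) = fun _ => 0 := by
            rw [Function.iterate_succ_apply, fd_id, Function.iterate_succ_apply, fd_const,
              fd_zero_iter]
          rw [hz]
          simp
      rw [Finset.sum_eq_single_of_mem 1 (Finset.mem_range.mpr (by omega)) hcollapse]
      have h2 : fd^[1] (fun t : ℤ => t) 0 = 1 := by simp [fd_id]
      have h3 : fd^[j'+1-1] (fun t : ℤ => t^q) ((0:ℤ) + ((1:ℕ):ℤ)) =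
          fd^[j'] (fun t : ℤ => t^q) 0 + fd^[j'+1] (fun t : ℤ => t^q) 0 := by
        have h := fdS' (fun t : ℤ => t^q) j' 0
        rw [zero_add] at h
        simp only [Nat.add_sub_cancel, Nat.cast_one, zero_add]
        omega
      rw [h2, h3, ih j', ih (j'+1)]
      show ((j'+1 : ℕ).choose 1 : ℤ) * 1 * _ = _
      rw [Nat.choose_one_right]
      show ((j'+1 : ℕ) : ℤ) * 1 * ((Nat.factorial j' * stirling q j' : ℕ) +
        ((Nat.factorial (j'+1) * stirling q (j'+1) : ℕ)) : ℤ) = _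
      have hst : stirling (q+1) (j'+1) = stirling q j' + (j'+1) * stirling q (j'+1) := rfl
      rw [hst]
      push_cast [Nat.factorial_succ]
      ring

lemma stirling_pos_s11 : ∀ q j : ℕ, j ≤ q → 0 < stirling (q+1) (j+1) := by
  intro q
  induction q with
  | zero =>
    intro j hj
    interval_cases j
    simp [stirling]
  | succ q ih =>
    intro j hj
    match j with
    | 0 =>
      have h0 := ih 0 (by omega)
      norm_num at h0 ⊢
      have hst : stirling (q+1+1) 1 = stirling (q+1) 0 + 1 * stirling (q+1) 1 := rfl
      omega
    | (j'+1) =>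
      have := ih j' (by omega)
      have hst : stirling (q+1+1) (j'+1+1) = stirling (q+1) (j'+1) +
        (j'+2) * stirling (q+1) (j'+2) := rfl
      omega

/-- For `1 ≤ j ≤ q ≤ 2i`, `n` even and positive, and `r ≥ ν₂((2i)!)`, the 2-adic
valuation of `2^{q−j}·j!·S(q,j)·C(2i,q)·n^{2i−q}·2^{r−ν₂((2i)!)}` is at least `r`. -/
theorem stmt_11 (q j i n r : ℕ) (hj : 1 ≤ j) (hjq : j ≤ q) (hq : q ≤ 2 * i)
    (hneven : Even n) (hnpos : 0 < n)
    (hr : padicValNat 2 (Nat.factorial (2 * i)) ≤ r) :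
    r ≤ padicValNat 2
      (2 ^ (q - j) * Nat.factorial j * stirling q j * Nat.choose (2 * i) q *
        n ^ (2 * i - q) * 2 ^ (r - padicValNat 2 (Nat.factorial (2 * i)))) := by
  haveI : Fact (Nat.Prime 2) := ⟨Nat.prime_two⟩
  set W := padicValNat 2 (Nat.factorial (2 * i)) with hW
  -- divisibility bound on j! * stirling q j
  have hSdvd : 2^(j - dsum q) ∣ Nat.factorial j * stirling q j := by
    have h := fd_pow_dvd q j 0
    rw [fd_pow_zero_eq q j] at h
    have h2 : ((2:ℤ))^(j - dsum q) = ((2^(j-dsum q) : ℕ) : ℤ) := by push_cast; ring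
    rw [h2] at h
    exact_mod_cast h
  -- nonzeroness
  have hS : stirling q j ≠ 0 := by
    obtain ⟨j', rfl⟩ : ∃ j', j = j'+1 := ⟨j-1, by omega⟩
    obtain ⟨q', rfl⟩ : ∃ q', q = q'+1 := ⟨q-1, by omega⟩
    exact (stirling_pos_s11 q' j' (by omega)).ne'
  have hne1 : (2:ℕ)^(q-j) ≠ 0 := by positivity
  have hne2 : Nat.factorial j ≠ 0 := (Nat.factorial_pos j).ne'
  have hne23 : Nat.factorial j * stirling q j ≠ 0 := mul_ne_zero hne2 hS
  have hne4 : Nat.choose (2*i) q ≠ 0 := (Nat.choose_pos hq).ne'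
  have hne5 : n^(2*i-q) ≠ 0 := pow_ne_zero _ (by omega)
  have hne6 : (2:ℕ)^(r - W) ≠ 0 := by positivity
  -- regroup the product
  have hprod : 2 ^ (q - j) * Nat.factorial j * stirling q j * Nat.choose (2 * i) q *
      n ^ (2 * i - q) * 2 ^ (r - W) =
      2 ^ (q - j) * (Nat.factorial j * stirling q j) * Nat.choose (2 * i) q *
      n ^ (2 * i - q) * 2 ^ (r - W) := by ring
  rw [hprod]
  rw [padicValNat.mul (mul_ne_zero (mul_ne_zero (mul_ne_zero hne1 hne23) hne4) hne5) hne6,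
    padicValNat.mul (mul_ne_zero (mul_ne_zero hne1 hne23) hne4) hne5,
    padicValNat.mul (mul_ne_zero hne1 hne23) hne4,
    padicValNat.mul hne1 hne23]
  rw [padicValNat.prime_pow, padicValNat.prime_pow, padicValNat.pow n]
  -- factorization of (2i)!
  have hfact : W = padicValNat 2 (Nat.choose (2*i) q) + padicValNat 2 (Nat.factorial q) +
      padicValNat 2 (Nat.factorial (2*i - q)) := by
    rw [hW, ← Nat.choose_mul_factorial_mul_factorial hq,
      padicValNat.mul (mul_ne_zero hne4 (Nat.factorial_pos q).ne') (Nat.factorial_pos _).ne',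
      padicValNat.mul hne4 (Nat.factorial_pos q).ne']
  -- Legendre
  have hLq : padicValNat 2 (Nat.factorial q) = q - dsum q := by
    have h := sub_one_mul_padicValNat_factorial (p := 2) q
    simpa [dsum] using h
  have hL2 : padicValNat 2 (Nat.factorial (2*i - q)) = (2*i - q) - dsum (2*i - q) := by
    have h := sub_one_mul_padicValNat_factorial (p := 2) (2*i - q)
    simpa [dsum] using h
  -- valuation bounds
  have hjs : j - dsum q ≤ padicValNat 2 (Nat.factorial j * stirling q j) :=
    (padicValNat_dvd_iff_le hne23).mp hSdvd
  have hvn : 1 ≤ padicValNat 2 n := by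
    have hdvd : (2:ℕ)^1 ∣ n := by simpa using hneven.two_dvd
    exact (padicValNat_dvd_iff_le (by omega)).mp hdvd
  have hX : 2*i - q ≤ (2*i - q) * padicValNat 2 n :=
    le_mul_of_one_le_right (by omega) hvn
  have hd1 := dsum_le q
  have hd2 := dsum_le (2*i - q)
  omega
end

section
/- For natural numbers n < q and integers c_q with ν₂(c_q) ≥ r − q + d(q), the 2-adic valuation of 2^{q−n} · n! · S(q,n) · c_q is at least r, where d is the binary digit sum and S(q,n) the Stirling number of the second kind. -/
/-!
`n! S(q, n)` counts the surjections of a `q`-set onto an `n`-set; sorting them by the preimage of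
the last point gives `(n + 1)! S(q, n + 1) = ∑_{k < q} C(q, k) n! S(k, n)`. By Kummer's theorem
`2^{d(q)} C(q, k)` is divisible by `2^{d(k) + d(q - k)}`, and `d(q - k) ≥ 1` because `k < q`, so
induction on `n` gives `2^n ∣ 2^{d(q)} n! S(q, n)`. Hence `2^q ∣ 2^{d(q)} 2^{q - n} n! S(q, n)`,
and combining this with `2^{r + d(q)} ∣ 2^q c` and cancelling `2^{d(q)}` gives the claim.
-/

open Finset Nat

theorem stirling_succ_succ_eq_sum (q n : ℕ) :
    stirling (q + 1) (n + 1) = ∑ k ∈ range (q + 1), q.choose k * stirling k n := by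
  induction q generalizing n with
  | zero => cases n <;> rfl
  | succ q ih =>
    have hpascal : ∑ k ∈ range (q + 2), (q + 1).choose k * stirling k n
        = (∑ k ∈ range (q + 1), q.choose k * stirling k n)
          + ∑ k ∈ range (q + 1), q.choose k * stirling (k + 1) n := by
      rw [sum_range_succ' _ (q + 1)]
      simp only [choose_succ_succ', add_mul, sum_add_distrib]
      rw [sum_range_succ (fun k => q.choose (k + 1) * stirling (k + 1) n),
        sum_range_succ' (fun k => q.choose k * stirling k n)]
      simp only [choose_succ_self, choose_zero_right, zero_mul, add_zero]
      ring
    rw [hpascal, ← ih]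
    cases n with
    | zero => simp [stirling]
    | succ m =>
      have hshift : ∑ k ∈ range (q + 1), q.choose k * stirling (k + 1) (m + 1)
          = stirling (q + 1) (m + 1) + (m + 1) * stirling (q + 1) (m + 2) := by
        simp only [stirling, mul_add, sum_add_distrib, mul_left_comm _ (m + 1), ← mul_sum, ← ih]
      rw [hshift, stirling]
      ring

theorem succ_mul_stirling_succ (q n : ℕ) :
    (n + 1) * stirling q (n + 1) = ∑ k ∈ range q, q.choose k * stirling k n := by
  cases q with
  | zero => rfl
  | succ q =>
    have h := stirling_succ_succ_eq_sum (q + 1) n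
    rw [sum_range_succ, choose_self, one_mul, stirling] at h
    omega

theorem binDigitSum_pos_s12 {m : ℕ} (hm : m ≠ 0) : 0 < binDigitSum m := by
  have hlt := sub_one_mul_padicValNat_factorial_lt_of_ne_zero 2 hm
  rw [sub_one_mul_padicValNat_factorial] at hlt
  unfold binDigitSum
  omega

theorem two_pow_binDigitSum_add_dvd_choose {q k : ℕ} (hk : k ≤ q) :
    2 ^ (binDigitSum k + binDigitSum (q - k)) ∣ 2 ^ binDigitSum q * q.choose k := by
  have kummer := sub_one_mul_padicValNat_choose_eq_sub_sum_digits (p := 2) hk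
  have hle :
      binDigitSum k + binDigitSum (q - k) ≤ binDigitSum q + padicValNat 2 (q.choose k) := by
    unfold binDigitSum
    omega
  calc 2 ^ (binDigitSum k + binDigitSum (q - k))
      ∣ 2 ^ (binDigitSum q + padicValNat 2 (q.choose k)) := pow_dvd_pow 2 hle
    _ = 2 ^ binDigitSum q * 2 ^ padicValNat 2 (q.choose k) := pow_add ..
    _ ∣ 2 ^ binDigitSum q * q.choose k := mul_dvd_mul_left _ pow_padicValNat_dvd

theorem two_pow_dvd_factorial_mul_stirling (n q : ℕ) :
    2 ^ n ∣ 2 ^ binDigitSum q * (n ! * stirling q n) := by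
  induction n generalizing q with
  | zero => exact one_dvd _
  | succ n ih =>
    have hsum : 2 ^ binDigitSum q * ((n + 1)! * stirling q (n + 1))
        = ∑ k ∈ range q, 2 ^ binDigitSum q * q.choose k * (n ! * stirling k n) := by
      rw [factorial_succ, mul_assoc, mul_left_comm _ (n !), succ_mul_stirling_succ, mul_sum,
        mul_sum]
      exact sum_congr rfl fun k _ => by ring
    rw [hsum]
    refine dvd_sum fun k hk => ?_
    have hkq := mem_range.mp hk
    have htwo : 2 ∣ 2 ^ binDigitSum (q - k) :=
      dvd_pow_self 2 (binDigitSum_pos_s12 (by omega)).ne'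
    calc 2 ^ (n + 1) = 2 * 2 ^ n := pow_succ' 2 n
      _ ∣ 2 ^ binDigitSum (q - k) * (2 ^ binDigitSum k * (n ! * stirling k n)) :=
        mul_dvd_mul htwo (ih k)
      _ = 2 ^ (binDigitSum k + binDigitSum (q - k)) * (n ! * stirling k n) := by ring
      _ ∣ 2 ^ binDigitSum q * q.choose k * (n ! * stirling k n) :=
        mul_dvd_mul_right (two_pow_binDigitSum_add_dvd_choose hkq.le) _

/-- The hypothesis `ν₂(c) ≥ r − q + d(q)` is encoded as `2^(r + d(q)) ∣ 2^q · c`, which also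
covers a negative right-hand side. -/
theorem stmt_12_general (n q r : ℕ) (c : ℤ)
    (hc : (2 : ℤ) ^ (r + binDigitSum q) ∣ 2 ^ q * c) :
    (2 : ℤ) ^ r ∣ 2 ^ (q - n) * Nat.factorial n * stirling q n * c := by
  have hkey : (2 : ℤ) ^ n ∣ 2 ^ binDigitSum q * (n ! * stirling q n) := by
    exact_mod_cast two_pow_dvd_factorial_mul_stirling n q
  obtain ⟨m, hm⟩ : (2 : ℤ) ^ q ∣ 2 ^ binDigitSum q * (2 ^ (q - n) * n ! * stirling q n) :=
    calc (2 : ℤ) ^ q ∣ 2 ^ (q - n) * 2 ^ n := by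
          rw [← pow_add]; exact pow_dvd_pow 2 (by omega)
      _ ∣ 2 ^ (q - n) * (2 ^ binDigitSum q * (n ! * stirling q n)) := mul_dvd_mul_left _ hkey
      _ = _ := by ring
  have hd : 2 ^ binDigitSum q * 2 ^ r ∣
      2 ^ binDigitSum q * ((2 : ℤ) ^ (q - n) * n ! * stirling q n * c) := by
    rw [← pow_add, add_comm, ← mul_assoc, hm, mul_right_comm]
    exact hc.mul_right m
  exact (mul_dvd_mul_iff_left (by positivity)).mp hd

/-- For `n < q` and an integer `c` with `ν₂(c) ≥ r − q + d(q)` (expressed as the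
divisibility `2^{r + d(q)} ∣ 2^q · c`, which also covers a possibly negative
right-hand side), the 2-adic valuation of `2^{q−n}·n!·S(q,n)·c` is at least `r`,
expressed as `2^r ∣ 2^{q−n}·n!·S(q,n)·c`. -/
theorem stmt_12 (n q r : ℕ) (c : ℤ) (hnq : n < q)
    (hc : (2 : ℤ) ^ (r + binDigitSum q) ∣ 2 ^ q * c) :
    (2 : ℤ) ^ r ∣ 2 ^ (q - n) * Nat.factorial n * stirling q n * c :=
  stmt_12_general n q r c hc
end

section
/- Let F be a field of characteristic ≠ 2 whose torsion Witt group satisfies 2^r·W_t(F) = 0, and let k be determined by ν₂((2k−2)!) < r ≤ ν₂((2k)!). Then for every 1 ≤ i ≤ k−1, the polynomial f(X) = 2^{r−ν₂((2i)!)}·X^{2i} annihilates every even-dimensional torsion form: f(φ) = 0 in W(F) for all φ ∈ I_t(F). -/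
/-- An abstract model of the Witt ring `W(F)` of a field `F` of characteristic ≠ 2,
given by its standard presentation: a commutative ring together with the classes
`gen a` of the one-dimensional forms `⟨a⟩` (for `a ∈ F*`), satisfying
multiplicativity, the square relation `⟨a²⟩ = ⟨1⟩`, the hyperbolic relation
`⟨1⟩ + ⟨−1⟩ = 0` and the chain (Witt) relation, additively generated by the `gen a`,
and equipped with the dimension-index homomorphism `e : W → ℤ/2`. -/
structure WittRing (F : Type*) [Field F] where
  /-- The underlying ring of Witt classes. -/
  W : Type*
  /-- The commutative ring structure. -/
  [commRing : CommRing W]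
  /-- The class of the one-dimensional form `⟨a⟩`. -/
  gen : Fˣ → W
  gen_one : gen 1 = 1
  gen_mul : ∀ a b : Fˣ, gen (a * b) = gen a * gen b
  gen_sq : ∀ a : Fˣ, gen (a * a) = 1
  hyperbolic : gen 1 + gen (-1) = 0
  chain : ∀ (a b : Fˣ) (h : (a : F) + (b : F) ≠ 0),
    gen a + gen b =
      gen (Units.mk0 ((a : F) + (b : F)) h) +
        gen (a * b * Units.mk0 ((a : F) + (b : F)) h)
  generates : AddSubgroup.closure (Set.range gen) = (⊤ : AddSubgroup W)
  /-- The dimension index `e : W(F) → ℤ/2ℤ`; its kernel is the fundamental ideal. -/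
  dimIdx : W →+* ZMod 2
  dimIdx_gen : ∀ a : Fˣ, dimIdx (gen a) = 1

attribute [instance] WittRing.commRing


section Aux

lemma my_val_fact_le {k : ℕ} (hk : 1 ≤ k) : padicValNat 2 (Nat.factorial k) ≤ k - 1 := by
  have h := sub_one_mul_padicValNat_factorial (p := 2) k
  simp at h
  have hne : Nat.digits 2 k ≠ [] := Nat.digits_ne_nil_iff_ne_zero.mpr (by omega)
  have hlast := Nat.getLast_digit_ne_zero 2 (m := k) (by omega : k ≠ 0)
  have hmem := List.getLast_mem hne
  have h1 : 1 ≤ (Nat.digits 2 k).sum := by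
    have := List.single_le_sum (fun (x : ℕ) _ => Nat.zero_le x) _ hmem
    omega
  omega

lemma my_val_fact_mono {a b : ℕ} (h : a ≤ b) :
    padicValNat 2 (Nat.factorial a) ≤ padicValNat 2 (Nat.factorial b) := by
  have hd : Nat.factorial a ∣ Nat.factorial b := Nat.factorial_dvd_factorial h
  have h2 : (2 : ℕ) ^ padicValNat 2 (Nat.factorial a) ∣ Nat.factorial b :=
    dvd_trans pow_padicValNat_dvd hd
  exact (padicValNat_dvd_iff_le (Nat.factorial_ne_zero b)).mp h2

variable {R : Type*} [CommRing R]

lemma my_pow_eq {p u : R} (hp : p ^ 2 = 2 * u * p) :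
    ∀ m : ℕ, 1 ≤ m → p ^ m = 2 ^ (m - 1) * (u ^ (m - 1) * p) := by
  intro m hm
  induction m with
  | zero => omega
  | succ n ih =>
    rcases Nat.eq_or_lt_of_le hm with h1 | h1
    · simp [← h1]
    · have hn : 1 ≤ n := by omega
      have hpow : p ^ (n + 1) = p ^ n * p := by ring
      rw [hpow, ih hn]
      have h2 : 2 ^ (n - 1) * (u ^ (n - 1) * p) * p = 2 ^ (n - 1) * (u ^ (n - 1) * p ^ 2) := by
        ring
      rw [h2, hp, Nat.add_sub_cancel]
      obtain ⟨j, rfl⟩ : ∃ j, n = j + 1 := ⟨n - 1, by omega⟩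
      simp only [Nat.add_sub_cancel]
      ring

lemma my_cast_pow_dvd (v : ℕ) (c : ℕ) (h : v ≤ padicValNat 2 c) :
    (2 : R) ^ v ∣ (c : R) := by
  have : (2 : ℕ) ^ v ∣ c := dvd_trans (pow_dvd_pow 2 h) pow_padicValNat_dvd
  obtain ⟨d, hd⟩ := this
  exact ⟨(d : R), by rw [hd]; push_cast; ring⟩

/-- Key divisibility: if each `pⱼ² = 2 uⱼ pⱼ`, then `(Σ pⱼ)^n` is divisible by
`2 ^ ν₂(n!)`. -/
lemma my_key (L : List (R × R)) (hL : ∀ q ∈ L, q.1 ^ 2 = 2 * q.2 * q.1) (n : ℕ) :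
    (2 : R) ^ (padicValNat 2 (Nat.factorial n)) ∣ (L.map Prod.fst).sum ^ n := by
  induction L generalizing n with
  | nil =>
    rcases Nat.eq_zero_or_pos n with rfl | hn
    · simp [Nat.factorial]
    · simp [zero_pow (by omega : n ≠ 0)]
  | cons q L ih =>
    have hq : q.1 ^ 2 = 2 * q.2 * q.1 := hL q List.mem_cons_self
    have hL' : ∀ x ∈ L, x.1 ^ 2 = 2 * x.2 * x.1 := fun x hx => hL x (List.mem_cons_of_mem q hx)
    set t : R := (L.map Prod.fst).sum with ht
    have hsum : ((q :: L).map Prod.fst).sum = q.1 + t := by simp [ht]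
    rw [hsum, add_pow]
    apply Finset.dvd_sum
    intro m hm
    have hmn : m ≤ n := Nat.lt_succ_iff.mp (Finset.mem_range.mp hm)
    have hc0 : n.choose m ≠ 0 := (Nat.choose_pos hmn).ne'
    have hvalsum : padicValNat 2 (Nat.factorial n) =
        padicValNat 2 (n.choose m) + padicValNat 2 (Nat.factorial m)
          + padicValNat 2 (Nat.factorial (n - m)) := by
      have hfac : n.choose m * Nat.factorial m * Nat.factorial (n - m) = Nat.factorial n :=
        Nat.choose_mul_factorial_mul_factorial hmn
      rw [← hfac, padicValNat.mul (Nat.mul_ne_zero hc0 (Nat.factorial_ne_zero m))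
        (Nat.factorial_ne_zero (n - m)), padicValNat.mul hc0 (Nat.factorial_ne_zero m)]
    rcases Nat.eq_zero_or_pos m with rfl | hm1
    · -- term: q.1^0 * t^n * C(n,0)
      simp only [pow_zero, one_mul, Nat.sub_zero]
      have h1 := ih hL' n
      calc (2:R) ^ padicValNat 2 (Nat.factorial n)
          ∣ t ^ n := h1
        _ ∣ t ^ n * (n.choose 0 : R) := dvd_mul_right _ _
    · rw [my_pow_eq hq m hm1]
      have h1 : (2:R) ^ (m - 1) ∣ 2 ^ (m - 1) * (q.2 ^ (m - 1) * q.1) := dvd_mul_right _ _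
      have h2 : (2:R) ^ padicValNat 2 (Nat.factorial (n - m)) ∣ t ^ (n - m) := ih hL' (n - m)
      have h3 : (2:R) ^ padicValNat 2 (n.choose m) ∣ (n.choose m : R) :=
        my_cast_pow_dvd _ _ le_rfl
      have h4 := mul_dvd_mul (mul_dvd_mul h1 h2) h3
      rw [← pow_add, ← pow_add] at h4
      refine dvd_trans (pow_dvd_pow (2:R) ?_) h4
      have h5 : padicValNat 2 (Nat.factorial m) ≤ m - 1 := my_val_fact_le hm1
      omega

end Aux


section WittAux

variable {F : Type*} [Field F]

lemma my_gen_neg (V : WittRing F) (a : Fˣ) : V.gen (-a) = - V.gen a := by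
  have h1 : V.gen (-1) = -1 := by
    have h := V.hyperbolic
    rw [V.gen_one] at h
    exact eq_neg_of_add_eq_zero_right h
  rw [show (-a : Fˣ) = (-1) * a from (neg_one_mul a).symm, V.gen_mul, h1]
  ring

lemma my_sum_map_neg {R : Type*} [CommRing R] (l : List R) :
    (l.map (fun x => -x)).sum = - l.sum := by
  induction l with
  | nil => simp
  | cons a l ih => simp [ih]; ring

lemma my_repr (V : WittRing F) (x : V.W) : ∃ l : List Fˣ, x = (l.map V.gen).sum := by
  have hx : x ∈ AddSubgroup.closure (Set.range V.gen) := by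
    rw [V.generates]; exact AddSubgroup.mem_top x
  induction hx using AddSubgroup.closure_induction with
  | mem y hy =>
    obtain ⟨a, rfl⟩ := hy
    exact ⟨[a], by simp⟩
  | zero => exact ⟨[], by simp⟩
  | add y z hy hz ihy ihz =>
    obtain ⟨l1, rfl⟩ := ihy
    obtain ⟨l2, rfl⟩ := ihz
    exact ⟨l1 ++ l2, by simp⟩
  | neg y hy ihy =>
    obtain ⟨l, rfl⟩ := ihy
    refine ⟨l.map (fun a => -a), ?_⟩
    rw [List.map_map]
    have : (List.map (V.gen ∘ fun a => -a) l) = List.map (fun a => - V.gen a) l := by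
      apply List.map_congr_left
      intro a _
      simp [Function.comp, my_gen_neg]
    rw [this]
    have h2 : List.map (fun a => - V.gen a) l = List.map (fun x => -x) (List.map V.gen l) := by
      simp [List.map_map]
    rw [h2, my_sum_map_neg]

lemma my_dimIdx_sum (V : WittRing F) (l : List Fˣ) :
    V.dimIdx (l.map V.gen).sum = (l.length : ZMod 2) := by
  rw [map_list_sum, List.map_map]
  have : List.map (⇑V.dimIdx ∘ V.gen) l = List.map (fun _ => (1 : ZMod 2)) l := by
    apply List.map_congr_left
    intro a _
    simp [Function.comp, V.dimIdx_gen]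
  rw [this]
  simp [List.map_const', List.sum_replicate, nsmul_eq_mul]

lemma my_pair_up (V : WittRing F) :
    ∀ (m : ℕ) (l : List Fˣ), l.length = 2 * m →
      ∃ L : List (V.W × V.W), (∀ q ∈ L, q.1 ^ 2 = 2 * q.2 * q.1) ∧
        (L.map Prod.fst).sum = (l.map V.gen).sum := by
  intro m
  induction m with
  | zero =>
    intro l hl
    obtain rfl : l = [] := List.length_eq_zero_iff.mp (by omega)
    exact ⟨[], by simp, by simp⟩
  | succ n ih =>
    intro l hl
    rcases l with _ | ⟨a, _ | ⟨b, rest⟩⟩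
    · simp at hl
    · simp only [List.length_cons, List.length_nil] at hl; omega
    · have hr : rest.length = 2 * n := by
        simp only [List.length_cons] at hl; omega
      obtain ⟨L, hL, hLsum⟩ := ih rest hr
      refine ⟨(V.gen a + V.gen b, V.gen a) :: L, ?_, ?_⟩
      · intro q hq
        rcases List.mem_cons.mp hq with rfl | hq2
        · have ha : V.gen a * V.gen a = 1 := by rw [← V.gen_mul, V.gen_sq]
          have hb : V.gen b * V.gen b = 1 := by rw [← V.gen_mul, V.gen_sq]
          show (V.gen a + V.gen b) ^ 2 = 2 * V.gen a * (V.gen a + V.gen b)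
          linear_combination hb - ha
        · exact hL q hq2
      · simp only [List.map_cons, List.sum_cons, hLsum]; ring

end WittAux

/-- Let `F` be a field of characteristic ≠ 2 with `2^r·W_t(F) = 0` and let `k` satisfy
`ν₂((2k−2)!) < r ≤ ν₂((2k)!)`. Then for `1 ≤ i ≤ k−1`, the polynomial
`f(X) = 2^{r−ν₂((2i)!)}·X^{2i}` annihilates every even-dimensional torsion form
`φ ∈ I_t(F)`. -/

theorem stmt_15 (F : Type*) [Field F] (hF : (2 : F) ≠ 0) (V : WittRing F)
    (r k i : ℕ)
    (hk_lo : padicValNat 2 (Nat.factorial (2 * k - 2)) < r)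
    (hk_hi : r ≤ padicValNat 2 (Nat.factorial (2 * k)))
    (htors : ∀ x : V.W, IsOfFinAddOrder x → 2 ^ r • x = 0)
    (hi : 1 ≤ i) (hik : i ≤ k - 1)
    (φ : V.W) (hφt : IsOfFinAddOrder φ) (hφe : V.dimIdx φ = 0) :
    2 ^ (r - padicValNat 2 (Nat.factorial (2 * i))) • φ ^ (2 * i) = 0 := by
  set v := padicValNat 2 (Nat.factorial (2 * i)) with hv
  -- v < r
  have hvr : v < r := by
    have h1 : 2 * i ≤ 2 * k - 2 := by omega
    exact lt_of_le_of_lt (my_val_fact_mono h1) hk_lo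
  -- write φ as an even sum of generators
  obtain ⟨l, rfl⟩ := my_repr V φ
  have hlen : Even l.length := by
    have := my_dimIdx_sum V l
    rw [hφe] at this
    have h2 : (2 : ℕ) ∣ l.length := by
      exact (ZMod.natCast_eq_zero_iff l.length 2).mp this.symm
    obtain ⟨c, hc⟩ := h2
    exact ⟨c, by omega⟩
  obtain ⟨m, hm⟩ := hlen
  obtain ⟨L, hLp, hLsum⟩ := my_pair_up V m l (by omega)
  set φ := (l.map V.gen).sum with hφ
  -- divisibility
  have hdvd : (2 : V.W) ^ v ∣ φ ^ (2 * i) := by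
    rw [← hLsum]
    exact my_key L hLp (2 * i)
  obtain ⟨ξ, hξ⟩ := hdvd
  have hsmul : φ ^ (2 * i) = 2 ^ v • ξ := by
    rw [hξ, nsmul_eq_mul]
    push_cast
    ring
  -- torsion of φ^(2i)
  have hφ0 : 2 ^ r • φ ^ (2 * i) = 0 := by
    have h3 : φ ^ (2 * i) = φ * φ ^ (2 * i - 1) := by
      rw [← pow_succ']
      congr 1
      omega
    rw [h3, ← smul_mul_assoc, htors φ hφt, zero_mul]
  -- ξ is torsion
  have hξt : IsOfFinAddOrder ξ := by
    rw [isOfFinAddOrder_iff_nsmul_eq_zero]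
    refine ⟨2 ^ (r + v), pow_pos (by norm_num) _, ?_⟩
    rw [pow_add, mul_smul, ← hsmul, hφ0]
  have hξ0 : 2 ^ r • ξ = 0 := htors ξ hξt
  rw [hsmul, smul_smul, ← pow_add]
  rw [show r - v + v = r by omega, hξ0]
end

section
/- Let F be a field of characteristic ≠ 2 with 2^r·W_t(F) = 0 and k determined by ν₂((2k−2)!) < r ≤ ν₂((2k)!). Then X^{2k} annihilates every even-dimensional torsion form: φ^{2k} = 0 in W(F) for all φ ∈ I_t(F). -/
/-! ### Auxiliary number-theoretic lemmas -/

lemma wgood_val_choose_add (n i : ℕ) (h : i ≤ n) :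
    padicValNat 2 (n.choose i) + padicValNat 2 i.factorial
      + padicValNat 2 (n - i).factorial = padicValNat 2 n.factorial := by
  have key := Nat.choose_mul_factorial_mul_factorial h
  have h1 : n.choose i ≠ 0 := (Nat.choose_pos h).ne'
  rw [← key, padicValNat.mul (by positivity) (Nat.factorial_ne_zero _),
    padicValNat.mul h1 (Nat.factorial_ne_zero _)]

lemma wgood_val_factorial_le (n : ℕ) (hn : n ≠ 0) : padicValNat 2 n.factorial ≤ n - 1 := by
  have h := Nat.emultiplicity_two_factorial_lt hn
  rw [← padicValNat_eq_emultiplicity (Nat.factorial_ne_zero n)] at h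
  have : padicValNat 2 n.factorial < n := by exact_mod_cast h
  omega

/-! ### The key divisibility property -/

section
variable {R : Type*} [CommRing R]

/-- `x` is "good" if `2^{ν₂(n!)}` divides `x^n` for all `n`. -/
def WGood (x : R) : Prop := ∀ n : ℕ, (2 : R) ^ (padicValNat 2 n.factorial) ∣ x ^ n

lemma wgood_zero : WGood (0 : R) := by
  intro n
  rcases Nat.eq_zero_or_pos n with h | h
  · subst h; simp
  · rw [zero_pow h.ne']; exact dvd_zero _

lemma wgood_two_pow_val_dvd_cast (m : ℕ) : (2 : R) ^ (padicValNat 2 m) ∣ (m : R) := by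
  rcases Nat.eq_zero_or_pos m with h | h
  · subst h; simp
  · obtain ⟨c, hc⟩ : (2 : ℕ) ^ (padicValNat 2 m) ∣ m := pow_padicValNat_dvd
    exact ⟨(c : R), by exact_mod_cast congrArg (Nat.cast : ℕ → R) hc⟩

lemma wgood_add {x y : R} (hx : WGood x) (hy : WGood y) : WGood (x + y) := by
  intro n
  rw [add_pow]
  apply Finset.dvd_sum
  intro i hi
  have hin : i ≤ n := Nat.lt_succ_iff.mp (Finset.mem_range.mp hi)
  have h1 := hx i
  have h2 := hy (n - i)
  have h3 : (2 : R) ^ (padicValNat 2 (n.choose i)) ∣ ((n.choose i : ℕ) : R) :=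
    wgood_two_pow_val_dvd_cast _
  have hall := mul_dvd_mul (mul_dvd_mul h1 h2) h3
  rw [← pow_add, ← pow_add] at hall
  have hv : padicValNat 2 n.factorial ≤
      padicValNat 2 i.factorial + padicValNat 2 (n - i).factorial
        + padicValNat 2 (n.choose i) := by
    have := wgood_val_choose_add n i hin
    omega
  exact dvd_trans (pow_dvd_pow _ hv) hall

/-- An element `β` with `β² = 2·c·β` is good. -/
lemma wgood_of_sq {β c : R} (h : β * β = 2 * (c * β)) : WGood β := by
  have hpow : ∀ m : ℕ, β ^ (m + 1) = 2 ^ m * c ^ m * β := by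
    intro m
    induction m with
    | zero => simp
    | succ m ih =>
      rw [pow_succ, ih, mul_assoc, h]
      ring
  intro n
  rcases Nat.eq_zero_or_pos n with h0 | h0
  · subst h0; simp
  · obtain ⟨m, rfl⟩ := Nat.exists_eq_add_of_le h0
    rw [add_comm 1 m, hpow m]
    have hv : padicValNat 2 (m + 1).factorial ≤ m := by
      have := wgood_val_factorial_le (m + 1) (by omega); omega
    exact Dvd.dvd.mul_right (Dvd.dvd.mul_right (pow_dvd_pow _ hv) _) _

end

/-! ### Structure of the Witt ring -/

section WittAux

variable {F : Type*} [Field F] (V : WittRing F)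

lemma wittGenNeg (a : Fˣ) : V.gen (-a) = -V.gen a := by
  have h1 : V.gen (-1) = -1 := by
    have := V.hyperbolic
    rw [V.gen_one] at this
    linear_combination this
  calc V.gen (-a) = V.gen ((-1) * a) := by rw [neg_one_mul]
    _ = V.gen (-1) * V.gen a := V.gen_mul _ _
    _ = -V.gen a := by rw [h1]; ring

/-- Every element of the Witt ring is a sum of a list of generators. -/
lemma wittExistsList (x : V.W) :
    ∃ l : List V.W, (∀ y ∈ l, y ∈ Set.range V.gen) ∧ l.sum = x := by
  have hx : x ∈ AddSubgroup.closure (Set.range V.gen) := by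
    rw [V.generates]; trivial
  have hneg : ∀ y ∈ AddSubmonoid.closure (Set.range V.gen),
      -y ∈ AddSubmonoid.closure (Set.range V.gen) := by
    intro y hy
    induction hy using AddSubmonoid.closure_induction with
    | mem z hz =>
      obtain ⟨a, rfl⟩ := hz
      exact AddSubmonoid.subset_closure ⟨-a, wittGenNeg V a⟩
    | zero => simpa using AddSubmonoid.zero_mem _
    | add a b _ _ ha hb =>
      rw [neg_add]
      exact AddSubmonoid.add_mem _ ha hb
  have hmem : x ∈ AddSubmonoid.closure (Set.range V.gen) := by
    induction hx using AddSubgroup.closure_induction with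
    | mem z hz => exact AddSubmonoid.subset_closure hz
    | zero => exact AddSubmonoid.zero_mem _
    | add a b _ _ ha hb => exact AddSubmonoid.add_mem _ ha hb
    | neg a _ ha => exact hneg a ha
  exact AddSubmonoid.exists_list_of_mem_closure hmem

lemma wittDimIdxListSum (l : List V.W) (hl : ∀ y ∈ l, y ∈ Set.range V.gen) :
    V.dimIdx l.sum = (l.length : ZMod 2) := by
  induction l with
  | nil => simp
  | cons a t ih =>
    obtain ⟨u, rfl⟩ := hl a List.mem_cons_self
    rw [List.sum_cons, map_add, V.dimIdx_gen, ih (fun y hy => hl y (List.mem_cons_of_mem _ hy)),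
      List.length_cons]
    push_cast
    ring

/-- A binary form `⟨a⟩ + ⟨b⟩` is good. -/
lemma wittWGoodBinary (a b : Fˣ) : WGood (V.gen a + V.gen b) := by
  have ha : V.gen a * V.gen a = 1 := by rw [← V.gen_mul]; exact V.gen_sq a
  have hb : V.gen b * V.gen b = 1 := by rw [← V.gen_mul]; exact V.gen_sq b
  refine wgood_of_sq (c := V.gen a) ?_
  linear_combination hb - ha

/-- Sums of evenly many generators are good. -/
lemma wittWGoodEvenSum : ∀ (l : List V.W), (∀ y ∈ l, y ∈ Set.range V.gen) →
    Even l.length → WGood l.sum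
  | [], _, _ => by simpa using wgood_zero
  | [a], _, he => by simp [Nat.even_iff] at he
  | a :: b :: t, hl, he => by
    obtain ⟨u, hu⟩ := hl a (by simp)
    obtain ⟨v, hv⟩ := hl b (by simp)
    have ht : Even t.length := by
      rw [List.length_cons, List.length_cons, Nat.even_iff] at he
      rw [Nat.even_iff]
      omega
    have hIH := wittWGoodEvenSum t (fun y hy => hl y (by simp [hy])) ht
    rw [List.sum_cons, List.sum_cons, ← add_assoc, ← hu, ← hv]
    exact wgood_add (wittWGoodBinary V u v) hIH

end WittAux

/-- Let `F` be a field of characteristic ≠ 2 with `2^r·W_t(F) = 0` and let `k` satisfy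
`ν₂((2k−2)!) < r ≤ ν₂((2k)!)`. Then `X^{2k}` annihilates every even-dimensional
torsion form: `φ^{2k} = 0` for all `φ ∈ I_t(F)`. -/
theorem stmt_16 (F : Type*) [Field F] (hF : (2 : F) ≠ 0) (V : WittRing F)
    (r k : ℕ)
    (hk_lo : padicValNat 2 (Nat.factorial (2 * k - 2)) < r)
    (hk_hi : r ≤ padicValNat 2 (Nat.factorial (2 * k)))
    (htors : ∀ x : V.W, IsOfFinAddOrder x → 2 ^ r • x = 0)
    (φ : V.W) (hφt : IsOfFinAddOrder φ) (hφe : V.dimIdx φ = 0) :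
    φ ^ (2 * k) = 0 := by
  -- `r ≥ 1` and `k ≥ 1`
  have hr1 : 1 ≤ r := by omega
  have hk1 : 1 ≤ k := by
    by_contra h
    have hk0 : k = 0 := by omega
    rw [hk0] at hk_hi
    simp [Nat.factorial] at hk_hi
    omega
  -- decompose φ into an even-length list of generators
  obtain ⟨l, hl, hsum⟩ := wittExistsList V φ
  have hlen : (l.length : ZMod 2) = 0 := by
    rw [← wittDimIdxListSum V l hl, hsum, hφe]
  have heven : Even l.length := by
    rw [ZMod.natCast_eq_zero_iff] at hlen
    exact (even_iff_two_dvd).mpr hlen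
  have hgood : WGood φ := hsum ▸ wittWGoodEvenSum V l hl heven
  -- divisibility: φ^{2k} = 2^r • ψ
  have hdvd : (2 : V.W) ^ r ∣ φ ^ (2 * k) :=
    dvd_trans (pow_dvd_pow _ hk_hi) (hgood (2 * k))
  obtain ⟨ψ, hψ⟩ := hdvd
  have hψ' : φ ^ (2 * k) = (2 ^ r : ℕ) • ψ := by
    rw [nsmul_eq_mul, hψ]
    push_cast
    ring
  -- φ^{2k} is torsion
  obtain ⟨n, hn, hnφ⟩ := isOfFinAddOrder_iff_nsmul_eq_zero.mp hφt
  have htor2k : n • φ ^ (2 * k) = 0 := by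
    have h2k : 2 * k = (2 * k - 1) + 1 := by omega
    rw [h2k, pow_succ', ← smul_mul_assoc, hnφ, zero_mul]
  -- hence ψ is torsion
  have hψfin : IsOfFinAddOrder ψ := by
    refine isOfFinAddOrder_iff_nsmul_eq_zero.mpr ⟨n * 2 ^ r, by positivity, ?_⟩
    rw [mul_smul, ← hψ', htor2k]
  -- conclude
  rw [hψ', htors ψ hψfin]
end

section
/- For every l ≥ 1 and every even-dimensional form φ ∈ I(F) in the Witt ring of a field F of characteristic ≠ 2, the element q_l(φ) := φ(φ−2)(φ−4)⋯(φ−2(l−1)) lies in 2^{ν₂(l!)}·I(F)^l, where I(F) is the fundamental ideal and ν₂ the 2-adic valuation. -/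
open Finset

section StepTwoDescFactorial

variable {R : Type*} [CommRing R]

def stepTwoDescFactorial (x : R) (l : ℕ) : R :=
  ∏ m ∈ range l, (x - (2 * m : ℕ) • (1 : R))

@[simp]
lemma stepTwoDescFactorial_zero (x : R) : stepTwoDescFactorial x 0 = 1 := prod_range_zero _

lemma stepTwoDescFactorial_succ (x : R) (l : ℕ) :
    stepTwoDescFactorial x (l + 1) = stepTwoDescFactorial x l * (x - 2 * l) := by
  simp [stepTwoDescFactorial, prod_range_succ]

lemma stepTwoDescFactorial_zero_left_succ (l : ℕ) : stepTwoDescFactorial (0 : R) (l + 1) = 0 :=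
  prod_eq_zero (mem_range.mpr l.succ_pos) (by simp)

lemma stepTwoDescFactorial_add (x y : R) (l : ℕ) :
    stepTwoDescFactorial (x + y) l = ∑ ij ∈ antidiagonal l,
      (l.choose ij.1 : R) * (stepTwoDescFactorial x ij.1 * stepTwoDescFactorial y ij.2) := by
  induction l with
  | zero => simp
  | succ l ih =>
    rw [stepTwoDescFactorial_succ, ih, sum_mul, sum_antidiagonal_choose_succ_mul
      (fun i j ↦ stepTwoDescFactorial x i * stepTwoDescFactorial y j), ← sum_add_distrib]
    refine sum_congr rfl fun ij hij ↦ ?_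
    have hl : l = ij.1 + ij.2 := (mem_antidiagonal.mp hij).symm
    rw [← Nat.choose_symm_of_eq_add hl, stepTwoDescFactorial_succ, stepTwoDescFactorial_succ, hl]
    push_cast
    ring

end StepTwoDescFactorial

lemma padicValNat_choose_add_factorial (p : ℕ) [Fact p.Prime] (i j : ℕ) :
    padicValNat p ((i + j).choose i) + padicValNat p i.factorial + padicValNat p j.factorial =
      padicValNat p (i + j).factorial := by
  have hchoose := Nat.choose_pos (Nat.le_add_left j i)
  rw [Nat.choose_symm_add, ← Nat.add_choose_mul_factorial_mul_factorial,
    padicValNat.mul (mul_pos hchoose i.factorial_pos).ne' j.factorial_ne_zero,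
    padicValNat.mul hchoose.ne' i.factorial_ne_zero]

section HasQDividedPowers

variable {R : Type*} [CommRing R]

lemma natCast_mem_span_two_pow_padicValNat (n : ℕ) :
    (n : R) ∈ Ideal.span {(2 : R) ^ padicValNat 2 n} :=
  Ideal.mem_span_singleton.mpr <| by
    simpa using map_dvd (Nat.castRingHom R) (pow_padicValNat_dvd (p := 2) (n := n))

def HasQDividedPowers (I : Ideal R) (x : R) : Prop :=
  ∀ l, stepTwoDescFactorial x l ∈ Ideal.span {(2 : R) ^ padicValNat 2 l.factorial} * I ^ l

variable {I : Ideal R}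

lemma stepTwoDescFactorial_zero_mem (x : R) :
    stepTwoDescFactorial x 0 ∈
      Ideal.span {(2 : R) ^ padicValNat 2 (0 : ℕ).factorial} * I ^ 0 := by
  simp

lemma hasQDividedPowers_zero : HasQDividedPowers I 0
  | 0 => stepTwoDescFactorial_zero_mem 0
  | l + 1 => by rw [stepTwoDescFactorial_zero_left_succ]; exact zero_mem _

lemma HasQDividedPowers.add {x y : R} (hx : HasQDividedPowers I x) (hy : HasQDividedPowers I y) :
    HasQDividedPowers I (x + y) := by
  intro l
  rw [stepTwoDescFactorial_add]
  refine sum_mem fun ij hij ↦ ?_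
  obtain rfl : ij.1 + ij.2 = l := mem_antidiagonal.mp hij
  have hprod := Ideal.mul_mem_mul
    (natCast_mem_span_two_pow_padicValNat (R := R) ((ij.1 + ij.2).choose ij.1))
    (Ideal.mul_mem_mul (hx ij.1) (hy ij.2))
  rwa [mul_mul_mul_comm, ← mul_assoc, Ideal.span_singleton_mul_span_singleton,
    Ideal.span_singleton_mul_span_singleton, ← pow_add, ← pow_add, ← pow_add, ← add_assoc,
    padicValNat_choose_add_factorial] at hprod

lemma hasQDividedPowers_of_mul_sub_two {τ σ : R} (h2 : (2 : R) ∈ I) (hτ : τ ∈ I)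
    (hσ : σ ∈ I ^ 2) (hττ : τ * (τ - 2) = 2 * σ) (hστ : σ * τ = -(2 * σ)) :
    HasQDividedPowers I τ := by
  have hclosed : ∀ j : ℕ,
      stepTwoDescFactorial τ (j + 2) = ((j + 2).factorial : R) * ((-2) ^ j * σ) := by
    intro j
    induction j with
    | zero => simp [stepTwoDescFactorial_succ, hττ]
    | succ j ih =>
      rw [stepTwoDescFactorial_succ, ih, Nat.factorial_succ (j + 2)]
      push_cast
      linear_combination (j + 2).factorial * (-2) ^ j * hστ
  rintro (_ | _ | j)
  · exact stepTwoDescFactorial_zero_mem τ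
  · simpa [stepTwoDescFactorial_succ] using hτ
  · rw [hclosed]
    refine Ideal.mul_mem_mul (natCast_mem_span_two_pow_padicValNat _) ?_
    have h := Ideal.mul_mem_mul (Ideal.pow_mem_pow (neg_mem h2) j) hσ
    rwa [← pow_add] at h

end HasQDividedPowers

namespace WittRing

variable {F : Type*} [Field F] (V : WittRing F)

lemma gen_mul_self (a : Fˣ) : V.gen a * V.gen a = 1 := by
  rw [← V.gen_mul, V.gen_sq]

lemma two_eq_gen_one_sub_gen_neg_one : (2 : V.W) = V.gen 1 - V.gen (-1) := by
  linear_combination V.hyperbolic - 2 * V.gen_one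

def genDiffs : Set V.W := {x | ∃ a b : Fˣ, x = V.gen a - V.gen b}

lemma gen_sub_gen_mem_ker (a b : Fˣ) : V.gen a - V.gen b ∈ RingHom.ker V.dimIdx := by
  rw [RingHom.mem_ker, map_sub, V.dimIdx_gen, V.dimIdx_gen, sub_self]

lemma closure_genDiffs_le_ker :
    AddSubgroup.closure V.genDiffs ≤ (RingHom.ker V.dimIdx).toAddSubgroup :=
  (AddSubgroup.closure_le _).mpr fun _ ⟨a, b, hx⟩ ↦ hx ▸ V.gen_sub_gen_mem_ker a b

lemma exists_sub_intCast_mem_closure_genDiffs (x : V.W) :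
    ∃ n : ℤ, x - n ∈ AddSubgroup.closure V.genDiffs := by
  have hx : x ∈ AddSubgroup.closure (Set.range V.gen) := V.generates ▸ AddSubgroup.mem_top x
  induction hx using AddSubgroup.closure_induction with
  | mem _ h =>
    obtain ⟨a, rfl⟩ := h
    exact ⟨1, AddSubgroup.subset_closure ⟨a, 1, by rw [V.gen_one, Int.cast_one]⟩⟩
  | zero => exact ⟨0, by simp⟩
  | add x y _ _ hx hy =>
    obtain ⟨m, hm⟩ := hx
    obtain ⟨n, hn⟩ := hy
    exact ⟨m + n, by convert add_mem hm hn using 1; push_cast; ring⟩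
  | neg x _ hx =>
    obtain ⟨n, hn⟩ := hx
    exact ⟨-n, by convert neg_mem hn using 1; push_cast; ring⟩

lemma mem_closure_genDiffs_of_mem_ker {x : V.W} (hx : x ∈ RingHom.ker V.dimIdx) :
    x ∈ AddSubgroup.closure V.genDiffs := by
  obtain ⟨n, hn⟩ := V.exists_sub_intCast_mem_closure_genDiffs x
  have hn_even : (n : ZMod 2) = 0 := by
    simpa [RingHom.mem_ker.mp hx] using V.closure_genDiffs_le_ker hn
  obtain ⟨t, rfl⟩ := (ZMod.intCast_zmod_eq_zero_iff_dvd n 2).mp hn_even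
  have htwo : (2 : V.W) ∈ AddSubgroup.closure V.genDiffs :=
    AddSubgroup.subset_closure ⟨1, -1, V.two_eq_gen_one_sub_gen_neg_one⟩
  convert add_mem hn (zsmul_mem htwo t) using 1
  push_cast
  ring

lemma hasQDividedPowers_gen_sub_gen (a b : Fˣ) :
    HasQDividedPowers (RingHom.ker V.dimIdx) (V.gen a - V.gen b) := by
  have hga := V.gen_mul_self a
  have hgb := V.gen_mul_self b
  refine hasQDividedPowers_of_mul_sub_two (σ := (1 - V.gen a) * (1 + V.gen b)) ?_
    (V.gen_sub_gen_mem_ker a b) ?_ (by linear_combination hga + hgb)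
    (by linear_combination (-(1 + V.gen b)) * hga + (V.gen a - 1) * hgb)
  · rw [V.two_eq_gen_one_sub_gen_neg_one]
    exact V.gen_sub_gen_mem_ker 1 (-1)
  · rw [sq]
    refine Ideal.mul_mem_mul ?_ ?_
    · simp [RingHom.mem_ker, V.dimIdx_gen]
    · simp only [RingHom.mem_ker, map_add, map_one, V.dimIdx_gen]
      decide

lemma hasQDividedPowers_of_mem_closure_genDiffs {x : V.W}
    (hx : x ∈ AddSubgroup.closure V.genDiffs) : HasQDividedPowers (RingHom.ker V.dimIdx) x := by
  induction hx using AddSubgroup.closure_induction'' with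
  | mem _ h =>
    obtain ⟨a, b, rfl⟩ := h
    exact V.hasQDividedPowers_gen_sub_gen a b
  | neg_mem _ h =>
    obtain ⟨a, b, rfl⟩ := h
    rw [neg_sub]
    exact V.hasQDividedPowers_gen_sub_gen b a
  | zero => exact hasQDividedPowers_zero
  | add _ _ _ _ hx hy => exact hx.add hy

end WittRing

theorem stmt_19_general (F : Type*) [Field F] (V : WittRing F)
    (l : ℕ) (φ : V.W) (hφ : φ ∈ RingHom.ker V.dimIdx) :
    ∃ ψ ∈ (RingHom.ker V.dimIdx : Ideal V.W) ^ l,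
      ∏ m ∈ Finset.range l, (φ - (2 * m : ℕ) • (1 : V.W)) =
        2 ^ (padicValNat 2 (Nat.factorial l)) • ψ := by
  obtain ⟨ψ, hψ, hq⟩ := Ideal.mem_span_singleton_mul.mp
    (V.hasQDividedPowers_of_mem_closure_genDiffs (V.mem_closure_genDiffs_of_mem_ker hφ) l)
  exact ⟨ψ, hψ, by rw [nsmul_eq_mul, Nat.cast_pow, Nat.cast_ofNat]; exact hq.symm⟩

/-- For every `l ≥ 1` and every even-dimensional form `φ ∈ I(F)` in the Witt ring
of a field of characteristic ≠ 2, the element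
`q_l(φ) = φ(φ−2)(φ−4)⋯(φ−2(l−1))` lies in `2^{ν₂(l!)}·I(F)^l`, where `I(F)` is the
fundamental ideal (the kernel of the dimension index). -/
theorem stmt_19 (F : Type*) [Field F] (hF : (2 : F) ≠ 0) (V : WittRing F)
    (l : ℕ) (hl : 1 ≤ l) (φ : V.W) (hφ : φ ∈ RingHom.ker V.dimIdx) :
    ∃ ψ ∈ (RingHom.ker V.dimIdx : Ideal V.W) ^ l,
      ∏ m ∈ Finset.range l, (φ - (2 * m : ℕ) • (1 : V.W)) =
        2 ^ (padicValNat 2 (Nat.factorial l)) • ψ :=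
  stmt_19_general F V l φ hφ
end
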